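/- arXiv:1702.00806 — 8 statements merged into one kernel-verified Lean document; each statement's English description precedes it below -/
import Mathlib

section
/- A finite lattice L is topographically balanced if and only if L admits a rank function ρ satisfying 2ρ(s ∨ t) − ρ(s) − ρ(t) = ρ(s) + ρ(t) − 2ρ(s ∧ t) for all s, t ∈ L; moreover, when it exists, such a rank function is unique. -/
set_option linter.unusedSectionVars false

section Helpers

variable {L : Type*} [Lattice L] [Fintype L]

/-- A saturated chain from `x` to `y` of length `n`. -/
inductive SatChain : L → L → ℕ → Prop
  | refl (x : L) : SatChain x x 0
  | step {x y z : L} {n : ℕ} : x ⋖ y → SatChain y z n → SatChain x z (n + 1)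

theorem SatChain.le {x y : L} {n : ℕ} (h : SatChain x y n) : x ≤ y := by
  induction h with
  | refl => exact le_rfl
  | step hxy _ ih => exact hxy.le.trans ih

theorem SatChain.eq_of_zero {x y : L} (h : SatChain x y 0) : x = y := by
  cases h; rfl

theorem SatChain.self_eq_zero {x : L} {n : ℕ} (h : SatChain x x n) : n = 0 := by
  cases h with
  | refl => rfl
  | step hxy h' => exact absurd h'.le hxy.lt.not_ge

theorem SatChain.trans {x y z : L} {m n : ℕ} (h : SatChain x y m) (h' : SatChain y z n) :
    SatChain x z (m + n) := by
  induction h with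
  | refl => simpa using h'
  | step hxy _ ih =>
    have := SatChain.step hxy (ih h')
    simpa [Nat.add_right_comm] using this

theorem SatChain.snoc {x y z : L} {n : ℕ} (h : SatChain x y n) (h' : y ⋖ z) :
    SatChain x z (n + 1) :=
  h.trans (SatChain.step h' (SatChain.refl z))

theorem satChain_exists {y : L} : ∀ x : L, x ≤ y → ∃ n, SatChain x y n := by
  intro x
  induction x using WellFoundedGT.induction with
  | _ x ih =>
    intro hxy
    rcases eq_or_lt_of_le hxy with rfl | hlt
    · exact ⟨0, SatChain.refl x⟩
    · obtain ⟨z, hxz, hzy⟩ := exists_covBy_le_of_lt hlt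
      obtain ⟨n, hn⟩ := ih z hxz.lt hzy
      exact ⟨n + 1, SatChain.step hxz hn⟩

variable (L) in
/-- Condition (1) of topographic balance. -/
def Cond1 : Prop := ∀ v s t : L, v ⋖ s → v ⋖ t → s ≠ t → ∃! u : L, s ⋖ u ∧ t ⋖ u

variable (L) in
/-- Condition (2) of topographic balance. -/
def Cond2 : Prop := ∀ s t u : L, s ⋖ u → t ⋖ u → s ≠ t → ∃! v : L, v ⋖ s ∧ v ⋖ t

/-- If `v ⋖ s`, `v ⋖ t`, `s ≠ t` then `t` is not below `s`. -/
theorem not_le_of_valley {v s t : L} (hs : v ⋖ s) (ht : v ⋖ t) (hne : s ≠ t) : ¬ t ≤ s := by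
  intro hle
  rcases eq_or_lt_of_le hle with rfl | hlt
  · exact hne rfl
  · exact hs.2 ht.lt hlt

/-- The unique mountain over a valley is the join. -/
theorem valley_sup (h1 : Cond1 L) {v s t : L} (hs : v ⋖ s) (ht : v ⋖ t) (hne : s ≠ t) :
    s ⋖ s ⊔ t ∧ t ⋖ s ⊔ t := by
  obtain ⟨u, ⟨hsu, htu⟩, -⟩ := h1 v s t hs ht hne
  have hsup : s ⊔ t = u := by
    have h1' : s < s ⊔ t := lt_of_le_of_ne le_sup_left
      (fun h => not_le_of_valley hs ht hne (h ▸ le_sup_right))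
    have h2' : s ⊔ t ≤ u := sup_le hsu.lt.le htu.lt.le
    rcases eq_or_lt_of_le h2' with h | h
    · exact h
    · exact absurd h (hsu.2 h1')
  rw [hsup]; exact ⟨hsu, htu⟩

/-- The unique valley under a mountain is the meet. -/
theorem mountain_inf (h2 : Cond2 L) {u s t : L} (hs : s ⋖ u) (ht : t ⋖ u) (hne : s ≠ t) :
    s ⊓ t ⋖ s ∧ s ⊓ t ⋖ t := by
  obtain ⟨v, ⟨hvs, hvt⟩, -⟩ := h2 s t u hs ht hne
  have hne' : ¬ s ≤ t := by
    intro hle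
    rcases eq_or_lt_of_le hle with rfl | hlt
    · exact hne rfl
    · exact hs.2 hlt ht.lt
  have hinf : s ⊓ t = v := by
    have h1' : s ⊓ t < s := lt_of_le_of_ne inf_le_left
      (fun h => hne' (h ▸ inf_le_right : s ≤ t))
    have h2' : v ≤ s ⊓ t := le_inf hvs.lt.le hvt.lt.le
    rcases eq_or_lt_of_le h2' with h | h
    · exact h.symm
    · exact absurd h1' (hvs.2 h)
  rw [hinf]; exact ⟨hvs, hvt⟩

/-- Jordan–Hölder: under condition (1), all saturated chains between two points
have the same length. -/
theorem satChain_unique (h1 : Cond1 L) :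
    ∀ n : ℕ, ∀ m : ℕ, ∀ x y : L, SatChain x y n → SatChain x y m → n = m := by
  intro n
  induction n using Nat.strong_induction_on with
  | _ n ih =>
    intro m x y hn hm
    cases hn with
    | refl =>
      exact (hm.self_eq_zero).symm
    | step hxc hc =>
      rename_i c n'
      cases hm with
      | refl => exact absurd hc.le hxc.lt.not_ge
      | step hxd hd =>
        rename_i d m'
        by_cases hcd : c = d
        · subst hcd
          exact congrArg (· + 1) (ih n' (Nat.lt_succ_self _) m' c y hc hd)
        · have hval := valley_sup h1 hxc hxd hcd
          have huy : c ⊔ d ≤ y := sup_le hc.le hd.le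
          obtain ⟨k, hk⟩ := satChain_exists (c ⊔ d) huy
          have hc' : SatChain c y (k + 1) := SatChain.step hval.1 hk
          have hd' : SatChain d y (k + 1) := SatChain.step hval.2 hk
          have e1 : n' = k + 1 := ih n' (Nat.lt_succ_self _) (k + 1) c y hc hc'
          have e2 : n' = m' := ih n' (Nat.lt_succ_self _) m' d y (by rw [e1]; exact hd') hd
          omega

end Helpers

section Rho

variable {L : Type*} [Lattice L] [OrderBot L] [Fintype L]

/-- The rank of `x`: the length of some saturated chain from `⊥` to `x`. -/
noncomputable def rho (x : L) : ℕ := (satChain_exists ⊥ (bot_le : (⊥:L) ≤ x)).choose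

theorem rho_spec (x : L) : SatChain (⊥ : L) x (rho x) :=
  (satChain_exists ⊥ (bot_le : (⊥:L) ≤ x)).choose_spec

theorem rho_bot (h1 : Cond1 L) : rho (⊥ : L) = 0 :=
  satChain_unique h1 _ _ _ _ (rho_spec ⊥) (SatChain.refl ⊥)

theorem rho_covBy (h1 : Cond1 L) {x y : L} (h : x ⋖ y) : rho y = rho x + 1 :=
  satChain_unique h1 _ _ _ _ (rho_spec y) ((rho_spec x).snoc h)

theorem rho_add_of_satChain (h1 : Cond1 L) {x y : L} {k : ℕ} (h : SatChain x y k) :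
    rho y = rho x + k :=
  satChain_unique h1 _ _ _ _ (rho_spec y) ((rho_spec x).trans h)

theorem rho_strictMono (h1 : Cond1 L) {x y : L} (h : x < y) : rho x < rho y := by
  obtain ⟨k, hk⟩ := satChain_exists x h.le
  have hk0 : k ≠ 0 := fun h0 => h.ne (h0 ▸ hk).eq_of_zero
  have := rho_add_of_satChain h1 hk
  omega

theorem rho_mono (h1 : Cond1 L) {x y : L} (h : x ≤ y) : rho x ≤ rho y := by
  rcases eq_or_lt_of_le h with rfl | h
  · exact le_rfl
  · exact (rho_strictMono h1 h).le

/-- Semimodularity from condition (1). -/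
theorem semimodular (h1 : Cond1 L) :
    ∀ k : ℕ, ∀ s t : L, s ⊓ t ⋖ s → rho t - rho (s ⊓ t) = k → t ⋖ s ⊔ t := by
  intro k
  induction k using Nat.strong_induction_on with
  | _ k ih =>
    intro s t hcov hk
    by_cases hts : t = s ⊓ t
    · have hts' : t ≤ s := hts ▸ inf_le_left
      have : s ⊔ t = s := sup_eq_left.2 hts'
      rw [this, hts]
      exact hcov
    · have hlt : s ⊓ t < t := lt_of_le_of_ne inf_le_right (fun h => hts h.symm)
      obtain ⟨w, hw, hwt⟩ := exists_covBy_le_of_lt hlt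
      have hsw : s ≠ w := by
        rintro rfl
        exact hcov.lt.ne (le_antisymm inf_le_left (le_inf le_rfl hwt))
      have hval := valley_sup h1 hcov hw hsw
      -- hval : s ⋖ s ⊔ w ∧ w ⋖ s ⊔ w
      have hinf : (s ⊔ w) ⊓ t = w := by
        have hle1 : w ≤ (s ⊔ w) ⊓ t := le_inf le_sup_right hwt
        rcases hval.2.eq_or_eq hle1 inf_le_left with h | h
        · exact h
        · exfalso
          have hst : s ≤ t := le_sup_left.trans (h.symm.le.trans inf_le_right)
          exact hcov.lt.ne (le_antisymm inf_le_left (le_inf le_rfl hst))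
      have hcov' : (s ⊔ w) ⊓ t ⋖ s ⊔ w := by rw [hinf]; exact hval.2
      have hmeas : rho t - rho ((s ⊔ w) ⊓ t) < k := by
        rw [hinf]
        have h1' : rho w = rho (s ⊓ t) + 1 := rho_covBy h1 hw
        have h2' : rho (s ⊓ t) < rho t := rho_strictMono h1 hlt
        omega
      have := ih _ hmeas (s ⊔ w) t hcov' rfl
      have hsup : (s ⊔ w) ⊔ t = s ⊔ t := by
        rw [sup_assoc, sup_eq_right.2 hwt]
      rwa [hsup] at this

/-- Lower semimodularity from condition (2). -/
theorem cosemimodular (h1 : Cond1 L) (h2 : Cond2 L) :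
    ∀ k : ℕ, ∀ s t : L, s ⋖ s ⊔ t → rho (s ⊔ t) - rho t = k → s ⊓ t ⋖ t := by
  intro k
  induction k using Nat.strong_induction_on with
  | _ k ih =>
    intro s t hcov hk
    by_cases hts : t = s ⊔ t
    · have hts' : s ≤ t := le_sup_left.trans hts.ge
      rw [inf_eq_left.2 hts', hts]
      exact hcov
    · have hlt : t < s ⊔ t := lt_of_le_of_ne le_sup_right hts
      obtain ⟨w, htw, hw⟩ := exists_le_covBy_of_lt hlt
      have hsw : s ≠ w := by
        rintro rfl
        exact hcov.lt.ne' (sup_eq_left.2 htw)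
      have hmnt := mountain_inf h2 hcov hw hsw
      -- hmnt : s ⊓ w ⋖ s ∧ s ⊓ w ⋖ w
      have hsup : (s ⊓ w) ⊔ t = w := by
        have hle1 : (s ⊓ w) ⊔ t ≤ w := sup_le inf_le_right htw
        rcases hmnt.2.eq_or_eq le_sup_left hle1 with h | h
        · exfalso
          have hst : t ≤ s := le_sup_right.trans (h.le.trans inf_le_left)
          exact hcov.lt.ne' (sup_eq_left.2 hst)
        · exact h
      have hcov' : s ⊓ w ⋖ (s ⊓ w) ⊔ t := by rw [hsup]; exact hmnt.2
      have hmeas : rho ((s ⊓ w) ⊔ t) - rho t < k := by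
        rw [hsup]
        have h1' : rho (s ⊔ t) = rho w + 1 := rho_covBy h1 hw
        have h2' : rho t < rho (s ⊔ t) := rho_strictMono h1 hlt
        omega
      have := ih _ hmeas (s ⊓ w) t hcov' rfl
      have hinf : (s ⊓ w) ⊓ t = s ⊓ t := by
        rw [inf_assoc, inf_eq_right.2 htw]
      rwa [hinf] at this

end Rho

section Modular

variable {L : Type*} [Lattice L] [OrderBot L] [Fintype L]

theorem rho_sup_step (h1 : Cond1 L) {x x' t : L} (h : x ⋖ x') :
    rho (x' ⊔ t) ≤ rho (x ⊔ t) + 1 := by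
  by_cases hx' : x' ≤ x ⊔ t
  · have he : x' ⊔ t = x ⊔ t :=
      le_antisymm (sup_le hx' le_sup_right) (sup_le_sup_right h.le t)
    rw [he]; omega
  · have hb : x' ⊓ (x ⊔ t) = x := by
      rcases h.eq_or_eq (le_inf h.le le_sup_left) inf_le_left with hh | hh
      · exact hh
      · exact absurd (hh.symm.le.trans inf_le_right) hx'
    have hcov := semimodular h1 _ x' (x ⊔ t) (by rw [hb]; exact h) rfl
    have he : x' ⊔ (x ⊔ t) = x' ⊔ t := by
      rw [← sup_assoc, sup_eq_left.2 h.le]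
    rw [he] at hcov
    rw [rho_covBy h1 hcov]

theorem rho_sup_chain (h1 : Cond1 L) {x s : L} {k : ℕ} (h : SatChain x s k) (t : L) :
    rho (s ⊔ t) ≤ rho (x ⊔ t) + k := by
  induction h with
  | refl => simp
  | step hxy _ ih =>
    calc rho (_ ⊔ t) ≤ rho (_ ⊔ t) + _ := ih
    _ ≤ rho (_ ⊔ t) + 1 + _ := by exact Nat.add_le_add_right (rho_sup_step h1 hxy) _
    _ = _ := by omega

theorem rho_submodular (h1 : Cond1 L) (s t : L) :
    rho (s ⊔ t) + rho (s ⊓ t) ≤ rho s + rho t := by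
  obtain ⟨k, hk⟩ := satChain_exists (s ⊓ t) (inf_le_left : s ⊓ t ≤ s)
  have h1' : rho s = rho (s ⊓ t) + k := rho_add_of_satChain h1 hk
  have h2' := rho_sup_chain h1 hk t
  rw [sup_eq_right.2 (inf_le_right : s ⊓ t ≤ t)] at h2'
  omega

theorem rho_inf_step (h1 : Cond1 L) (h2 : Cond2 L) {x x' t : L} (h : x ⋖ x') :
    rho (x' ⊓ t) ≤ rho (x ⊓ t) + 1 := by
  by_cases hx : x' ⊓ t ≤ x
  · have he : x' ⊓ t = x ⊓ t :=
      le_antisymm (le_inf hx inf_le_right) (inf_le_inf_right t h.le)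
    rw [he]; omega
  · have hb : x ⊔ (x' ⊓ t) = x' := by
      rcases h.eq_or_eq le_sup_left (sup_le h.le inf_le_left) with hh | hh
      · exact absurd (le_sup_right.trans hh.le) hx
      · exact hh
    have hcov : x ⋖ x ⊔ (x' ⊓ t) := by rw [hb]; exact h
    have hres := cosemimodular h1 h2 _ x (x' ⊓ t) hcov rfl
    have he : x ⊓ (x' ⊓ t) = x ⊓ t := by
      rw [← inf_assoc, inf_eq_left.2 h.le]
    rw [he] at hres
    rw [rho_covBy h1 hres]

theorem rho_inf_chain (h1 : Cond1 L) (h2 : Cond2 L) {x s : L} {k : ℕ}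
    (h : SatChain x s k) (t : L) : rho (s ⊓ t) ≤ rho (x ⊓ t) + k := by
  induction h with
  | refl => simp
  | step hxy _ ih =>
    calc rho (_ ⊓ t) ≤ rho (_ ⊓ t) + _ := ih
    _ ≤ rho (_ ⊓ t) + 1 + _ := by exact Nat.add_le_add_right (rho_inf_step h1 h2 hxy) _
    _ = _ := by omega

theorem rho_supermodular (h1 : Cond1 L) (h2 : Cond2 L) (s t : L) :
    rho s + rho t ≤ rho (s ⊔ t) + rho (s ⊓ t) := by
  obtain ⟨k, hk⟩ := satChain_exists t (le_sup_right : t ≤ s ⊔ t)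
  have h1' : rho (s ⊔ t) = rho t + k := rho_add_of_satChain h1 hk
  have h2' := rho_inf_chain h1 h2 hk s
  rw [inf_eq_right.2 (le_sup_left : s ≤ s ⊔ t), inf_comm t s] at h2'
  omega

end Modular

section RankFn

variable {L : Type*} [Lattice L] [OrderBot L] [Fintype L]

theorem rank_add_of_satChain {ρ : L → ℕ} (hρ : ∀ x y : L, x ⋖ y → ρ y = ρ x + 1)
    {x y : L} {k : ℕ} (h : SatChain x y k) : ρ y = ρ x + k := by
  induction h with
  | refl => simp
  | step hxy _ ih => rw [ih, hρ _ _ hxy]; omega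

theorem rank_strictMono {ρ : L → ℕ} (hρ : ∀ x y : L, x ⋖ y → ρ y = ρ x + 1)
    {x y : L} (h : x < y) : ρ x < ρ y := by
  obtain ⟨k, hk⟩ := satChain_exists x h.le
  have hk0 : k ≠ 0 := fun h0 => h.ne (h0 ▸ hk).eq_of_zero
  have := rank_add_of_satChain hρ hk
  omega

theorem covBy_of_rank {ρ : L → ℕ} (hρ : ∀ x y : L, x ⋖ y → ρ y = ρ x + 1)
    {x y : L} (h : x < y) (hr : ρ y = ρ x + 1) : x ⋖ y := by
  refine ⟨h, fun c hc1 hc2 => ?_⟩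
  have := rank_strictMono hρ hc1
  have := rank_strictMono hρ hc2
  omega

end RankFn

/-- A finite lattice is topographically balanced if every "valley" `v ⋖ s`, `v ⋖ t` (`s ≠ t`)
is balanced by a unique "mountain" `s ⋖ u`, `t ⋖ u`, and vice versa. -/
def TopBalanced (L : Type*) [Lattice L] : Prop :=
  (∀ v s t : L, v ⋖ s → v ⋖ t → s ≠ t → ∃! u : L, s ⋖ u ∧ t ⋖ u) ∧
  (∀ s t u : L, s ⋖ u → t ⋖ u → s ≠ t → ∃! v : L, v ⋖ s ∧ v ⋖ t)

/-- A rank function on a finite lattice: `ρ ⊥ = 0` and `ρ y = ρ x + 1` whenever `x ⋖ y`. -/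
def IsRankFunction (L : Type*) [Lattice L] [OrderBot L] (ρ : L → ℕ) : Prop :=
  ρ ⊥ = 0 ∧ ∀ x y : L, x ⋖ y → ρ y = ρ x + 1

theorem stmt_0 (L : Type*) [Lattice L] [OrderBot L] [Fintype L] :
    (TopBalanced L ↔ ∃ ρ : L → ℕ, IsRankFunction L ρ ∧
        ∀ s t : L, 2 * (ρ (s ⊔ t) : ℤ) - ρ s - ρ t = (ρ s : ℤ) + ρ t - 2 * ρ (s ⊓ t)) ∧
    (∀ ρ₁ ρ₂ : L → ℕ,
      (IsRankFunction L ρ₁ ∧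
        ∀ s t : L, 2 * (ρ₁ (s ⊔ t) : ℤ) - ρ₁ s - ρ₁ t = (ρ₁ s : ℤ) + ρ₁ t - 2 * ρ₁ (s ⊓ t)) →
      (IsRankFunction L ρ₂ ∧
        ∀ s t : L, 2 * (ρ₂ (s ⊔ t) : ℤ) - ρ₂ s - ρ₂ t = (ρ₂ s : ℤ) + ρ₂ t - 2 * ρ₂ (s ⊓ t)) →
      ρ₁ = ρ₂) := by
  constructor
  · constructor
    · rintro ⟨h1, h2⟩
      refine ⟨rho, ⟨rho_bot h1, fun x y h => rho_covBy h1 h⟩, fun s t => ?_⟩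
      have hsub := rho_submodular h1 s t
      have hsup := rho_supermodular h1 h2 s t
      omega
    · rintro ⟨ρ, ⟨hbot, hcov⟩, hmod⟩
      have hmod' : ∀ s t : L, ρ (s ⊔ t) + ρ (s ⊓ t) = ρ s + ρ t := by
        intro s t; have := hmod s t; omega
      constructor
      · intro v s t hs ht hne
        have hst : ¬ t ≤ s := not_le_of_valley hs ht hne
        have hts : ¬ s ≤ t := not_le_of_valley ht hs (Ne.symm hne)
        have hv : v = s ⊓ t := by
          have h1' : v ≤ s ⊓ t := le_inf hs.le ht.le
          have h2' : s ⊓ t ≠ s := fun h => hts (h ▸ inf_le_right)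
          rcases hs.eq_or_eq h1' inf_le_left with h | h
          · exact h.symm
          · exact absurd h h2'
        have hρs : ρ s = ρ v + 1 := hcov v s hs
        have hρt : ρ t = ρ v + 1 := hcov v t ht
        have hm := hmod' s t
        rw [← hv] at hm
        have hslt : s < s ⊔ t :=
          lt_of_le_of_ne le_sup_left (fun h => hst (h ▸ le_sup_right))
        have htlt : t < s ⊔ t :=
          lt_of_le_of_ne le_sup_right (fun h => hts (h ▸ le_sup_left))
        have hρsup : ρ (s ⊔ t) = ρ s + 1 := by
          have := rank_strictMono hcov hslt
          omega
        have hcs : s ⋖ s ⊔ t := covBy_of_rank hcov hslt hρsup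
        have hct : t ⋖ s ⊔ t := covBy_of_rank hcov htlt (by omega)
        refine ⟨s ⊔ t, ⟨hcs, hct⟩, ?_⟩
        rintro u ⟨hsu, htu⟩
        have hle : s ⊔ t ≤ u := sup_le hsu.le htu.le
        rcases eq_or_lt_of_le hle with h | h
        · exact h.symm
        · have := rank_strictMono hcov h
          have := hcov s u hsu
          omega
      · intro s t u hs ht hne
        have hρs : ρ u = ρ s + 1 := hcov s u hs
        have hρt : ρ u = ρ t + 1 := hcov t u ht
        have hst : ¬ t ≤ s := by
          intro h
          rcases eq_or_lt_of_le h with rfl | h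
          · exact hne rfl
          · have := rank_strictMono hcov h; omega
        have hts : ¬ s ≤ t := by
          intro h
          rcases eq_or_lt_of_le h with rfl | h
          · exact hne rfl
          · have := rank_strictMono hcov h; omega
        have hu : s ⊔ t = u := by
          have h1' : s ⊔ t ≤ u := sup_le hs.le ht.le
          have h2' : s < s ⊔ t :=
            lt_of_le_of_ne le_sup_left (fun h => hst (h ▸ le_sup_right))
          rcases hs.eq_or_eq h2'.le h1' with h | h
          · exact absurd h.symm h2'.ne
          · exact h
        have hm := hmod' s t
        rw [hu] at hm
        have hilt : s ⊓ t < s :=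
          lt_of_le_of_ne inf_le_left (fun h => hts (h ▸ inf_le_right))
        have hilt' : s ⊓ t < t :=
          lt_of_le_of_ne inf_le_right (fun h => hst (h ▸ inf_le_left))
        have hmono := rank_strictMono hcov hilt
        have hcs : s ⊓ t ⋖ s := covBy_of_rank hcov hilt (by omega)
        have hct : s ⊓ t ⋖ t := covBy_of_rank hcov hilt' (by omega)
        refine ⟨s ⊓ t, ⟨hcs, hct⟩, ?_⟩
        rintro v ⟨hvs, hvt⟩
        have hle : v ≤ s ⊓ t := le_inf hvs.le hvt.le
        rcases eq_or_lt_of_le hle with h | h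
        · exact h
        · have := rank_strictMono hcov h
          have := hcov v s hvs
          omega
  · rintro ρ₁ ρ₂ ⟨⟨hb₁, hc₁⟩, -⟩ ⟨⟨hb₂, hc₂⟩, -⟩
    funext x
    obtain ⟨k, hk⟩ := satChain_exists (⊥ : L) (bot_le : (⊥:L) ≤ x)
    have e1 := rank_add_of_satChain hc₁ hk
    have e2 := rank_add_of_satChain hc₂ hk
    omega
end

section
/- Let L be a finite topographically balanced lattice with rank function ρ. Then for all s, t ∈ L, the distance between s and t in the cover graph of L equals ρ(s) + ρ(t) − 2ρ(s ∧ t), which also equals 2ρ(s ∨ t) − ρ(s) − ρ(t). -/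
/-- The cover graph of a lattice: `x` and `y` are adjacent iff one covers the other. -/
def coverGraph (L : Type*) [Lattice L] : SimpleGraph L where
  Adj x y := x ⋖ y ∨ y ⋖ x
  symm := ⟨fun _ _ h => h.symm⟩
  loopless := ⟨fun _ h => by rcases h with h | h <;> exact h.lt.false⟩

/-
Topographic balance makes a finite lattice both upper and lower semimodular: two distinct
upper covers of an element have a common upper cover, and induction up the interval `[x, z]`
turns this into "`x ⋖ y` and `x ≤ z` imply `z ⩿ y ⊔ z`". Consequently, moving `a` along an edge
of the cover graph changes `ρ (a ⊓ t)` and `ρ (a ⊔ t)` by at most one while `ρ a` changes by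
exactly one, so `ρ a - 2 ρ (a ⊓ t)` and `2 ρ (a ⊔ t) - ρ a` are `1`-Lipschitz potentials; their
drops from `s` to `t` bound `d(s, t)` from below. The walks `s ↘ s ⊓ t ↗ t` and `s ↗ s ⊔ t ↘ t`
realise these bounds.
-/

open SimpleGraph OrderDual

theorem SimpleGraph.Walk.sub_le_length {V : Type*} {G : SimpleGraph V} (φ : V → ℤ)
    (hφ : ∀ a b, G.Adj a b → φ a - φ b ≤ 1) {u v : V} (p : G.Walk u v) :
    φ u - φ v ≤ p.length := by
  induction p with
  | nil => simp
  | cons hadj _ ih =>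
    rw [Walk.length_cons]
    have := hφ _ _ hadj
    omega

theorem SimpleGraph.Reachable.sub_le_dist {V : Type*} {G : SimpleGraph V} (φ : V → ℤ)
    (hφ : ∀ a b, G.Adj a b → φ a - φ b ≤ 1) {u v : V} (h : G.Reachable u v) :
    φ u - φ v ≤ G.dist u v := by
  obtain ⟨p, hp⟩ := h.exists_walk_length_eq_dist
  exact hp ▸ p.sub_le_length φ hφ

section CoverGraph

variable {L : Type*} [Lattice L] {ρ : L → ℕ}

theorem CovBy.sup_wcovBy_sup_right [IsUpperModularLattice L] {x y : L} (hxy : x ⋖ y) (t : L) :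
    x ⊔ t ⩿ y ⊔ t := by
  by_cases hy : y ≤ x ⊔ t
  · rw [le_antisymm (sup_le hy le_sup_right) (sup_le_sup_right hxy.le t)]
    exact WCovBy.refl _
  have hinf : y ⊓ (x ⊔ t) = x :=
    (hxy.eq_or_eq (le_inf hxy.le le_sup_left) inf_le_left).resolve_right fun h =>
      hy (h.symm.le.trans inf_le_right)
  have := (hinf ▸ hxy).sup_of_inf_left
  rw [← sup_assoc, sup_eq_left.mpr hxy.le] at this
  exact this.wcovBy

theorem CovBy.inf_wcovBy_inf_right [IsLowerModularLattice L] {x y : L} (hxy : x ⋖ y) (t : L) :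
    x ⊓ t ⩿ y ⊓ t :=
  (hxy.toDual.sup_wcovBy_sup_right (OrderDual.toDual t)).ofDual

theorem wcovBy_sup_of_covBy_of_le [Finite L]
    (h : ∀ v s t : L, v ⋖ s → v ⋖ t → s ≠ t → ∃ u, s ⋖ u ∧ t ⋖ u)
    {x y z : L} (hxy : x ⋖ y) (hxz : x ≤ z) : z ⩿ y ⊔ z := by
  induction x using WellFoundedGT.induction generalizing y with
  | ind x ih =>
    obtain rfl | hlt := hxz.eq_or_lt
    · rw [sup_eq_left.mpr hxy.le]
      exact hxy.wcovBy
    by_cases hyz : y ≤ z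
    · rw [sup_eq_right.mpr hyz]
      exact WCovBy.refl z
    obtain ⟨x', hxx', hx'z⟩ := exists_covBy_le_of_lt hlt
    have hyx' : y ≠ x' := fun h => hyz (h ▸ hx'z)
    obtain ⟨u, hyu, hx'u⟩ := h x y x' hxy hxx' hyx'
    have hu : y ⊔ x' = u :=
      (hyu.eq_or_eq le_sup_left (sup_le hyu.le hx'u.le)).resolve_left fun h =>
        hyx' ((hxy.eq_or_eq hxx'.le (le_sup_right.trans h.le)).resolve_left hxx'.ne').symm
    have := ih x' hxx'.lt (hu ▸ hx'u) hx'z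
    rwa [sup_assoc, sup_eq_right.mpr hx'z] at this

theorem isUpperModularLattice_of_forall_covBy [Finite L]
    (h : ∀ v s t : L, v ⋖ s → v ⋖ t → s ≠ t → ∃ u, s ⋖ u ∧ t ⋖ u) :
    IsUpperModularLattice L where
  covBy_sup_of_inf_covBy {a b} hab := by
    refine ((wcovBy_sup_of_covBy_of_le h hab inf_le_right).covBy_of_ne fun heq => hab.ne ?_)
    exact inf_eq_left.mpr (heq ▸ le_sup_left)

theorem isLowerModularLattice_of_forall_covBy [Finite L]
    (h : ∀ s t u : L, s ⋖ u → t ⋖ u → s ≠ t → ∃ v, v ⋖ s ∧ v ⋖ t) :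
    IsLowerModularLattice L := by
  have : IsUpperModularLattice Lᵒᵈ := isUpperModularLattice_of_forall_covBy
    fun v s t hvs hvt hst => by
      obtain ⟨u, hus, hut⟩ := h (ofDual s) (ofDual t) (ofDual v)
        (ofDual_covBy_ofDual_iff.mpr hvs) (ofDual_covBy_ofDual_iff.mpr hvt) hst
      exact ⟨toDual u, ofDual_covBy_ofDual_iff.mp hus, ofDual_covBy_ofDual_iff.mp hut⟩
  exact (inferInstance : IsLowerModularLattice Lᵒᵈᵒᵈ)

theorem rank_eq_or_eq_add_one_of_wcovBy (hρ : ∀ x y : L, x ⋖ y → ρ y = ρ x + 1) {a b : L}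
    (h : a ⩿ b) : ρ b = ρ a ∨ ρ b = ρ a + 1 :=
  (wcovBy_iff_covBy_or_eq.mp h).elim (fun h => Or.inr (hρ _ _ h)) fun h => Or.inl (h ▸ rfl)

theorem abs_rank_sub_two_mul_rank_inf_sub_le [IsLowerModularLattice L]
    (hρ : ∀ x y : L, x ⋖ y → ρ y = ρ x + 1) (t : L) {a b : L} (h : a ⋖ b) :
    |((ρ b : ℤ) - 2 * ρ (b ⊓ t)) - (ρ a - 2 * ρ (a ⊓ t))| ≤ 1 := by
  have := hρ a b h
  rcases rank_eq_or_eq_add_one_of_wcovBy hρ (h.inf_wcovBy_inf_right t) with h' | h' <;>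
    rw [abs_le] <;> omega

theorem abs_two_mul_rank_sup_sub_rank_sub_le [IsUpperModularLattice L]
    (hρ : ∀ x y : L, x ⋖ y → ρ y = ρ x + 1) (t : L) {a b : L} (h : a ⋖ b) :
    |(2 * (ρ (b ⊔ t) : ℤ) - ρ b) - (2 * ρ (a ⊔ t) - ρ a)| ≤ 1 := by
  have := hρ a b h
  rcases rank_eq_or_eq_add_one_of_wcovBy hρ (h.sup_wcovBy_sup_right t) with h' | h' <;>
    rw [abs_le] <;> omega

theorem sub_le_dist_coverGraph {φ : L → ℤ} (hφ : ∀ a b : L, a ⋖ b → |φ b - φ a| ≤ 1) {s t : L}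
    (h : (coverGraph L).Reachable s t) : φ s - φ t ≤ (coverGraph L).dist s t :=
  h.sub_le_dist φ fun a b hab => by
    rcases hab with hab | hba
    · linarith [neg_le_abs (φ b - φ a), hφ a b hab]
    · exact (le_abs_self _).trans (hφ b a hba)

theorem exists_walk_coverGraph_of_le [Finite L] (hρ : ∀ x y : L, x ⋖ y → ρ y = ρ x + 1)
    {x y : L} (h : x ≤ y) : ∃ w : (coverGraph L).Walk x y, (w.length : ℤ) = ρ y - ρ x := by
  induction y using WellFoundedLT.induction with
  | ind y ih =>
    obtain rfl | hlt := h.eq_or_lt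
    · exact ⟨.nil, by simp⟩
    obtain ⟨y', hxy', hy'y⟩ := exists_le_covBy_of_lt hlt
    obtain ⟨w, hw⟩ := ih y' hy'y.lt hxy'
    refine ⟨w.concat (show (coverGraph L).Adj y' y from Or.inl hy'y), ?_⟩
    rw [Walk.length_concat, hρ y' y hy'y]
    push_cast
    omega

end CoverGraph

theorem stmt_1 (L : Type*) [Lattice L] [OrderBot L] [Fintype L]
    (htb : TopBalanced L) (ρ : L → ℕ) (hρ : IsRankFunction L ρ) :
    ∀ s t : L,
      (((coverGraph L).dist s t : ℤ) = (ρ s : ℤ) + ρ t - 2 * ρ (s ⊓ t)) ∧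
      (((coverGraph L).dist s t : ℤ) = 2 * (ρ (s ⊔ t) : ℤ) - ρ s - ρ t) := by
  have := isUpperModularLattice_of_forall_covBy fun v s t hs ht hst =>
    (htb.1 v s t hs ht hst).exists
  have := isLowerModularLattice_of_forall_covBy fun s t u hs ht hst =>
    (htb.2 s t u hs ht hst).exists
  intro s t
  obtain ⟨w₁, hw₁⟩ := exists_walk_coverGraph_of_le hρ.2 (inf_le_left : s ⊓ t ≤ s)
  obtain ⟨w₂, hw₂⟩ := exists_walk_coverGraph_of_le hρ.2 (inf_le_right : s ⊓ t ≤ t)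
  obtain ⟨w₃, hw₃⟩ := exists_walk_coverGraph_of_le hρ.2 (le_sup_left : s ≤ s ⊔ t)
  obtain ⟨w₄, hw₄⟩ := exists_walk_coverGraph_of_le hρ.2 (le_sup_right : t ≤ s ⊔ t)
  have hreach : (coverGraph L).Reachable s t := ⟨w₁.reverse.append w₂⟩
  have hinf := sub_le_dist_coverGraph
    (fun _ _ => abs_rank_sub_two_mul_rank_inf_sub_le hρ.2 t) hreach
  have hsup := sub_le_dist_coverGraph
    (fun _ _ => abs_two_mul_rank_sup_sub_rank_sub_le hρ.2 t) hreach
  have hw₁₂ : ((coverGraph L).dist s t : ℤ) ≤ (w₁.reverse.append w₂).length :=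
    Nat.cast_le.mpr (dist_le _)
  have hw₃₄ : ((coverGraph L).dist s t : ℤ) ≤ (w₃.append w₄.reverse).length :=
    Nat.cast_le.mpr (dist_le _)
  simp only [Walk.length_append, Walk.length_reverse, Nat.cast_add, inf_idem, sup_idem]
    at hw₁₂ hw₃₄ hinf hsup
  constructor <;> linarith
end

section
/- Let L be a finite topographically balanced lattice with rank function ρ, and let s, t ∈ L. Then there exist saturated chains s = x₀ ⋖ x₁ ⋖ ⋯ ⋖ x_m = s ∨ t and t = y₀ ⋖ y₁ ⋖ ⋯ ⋖ y_n = s ∨ t with m + n = d(s,t) (a shortest path from s to t through the join, a 'mountain path'), and dually there exist saturated chains s ∧ t = x'₀ ⋖ ⋯ ⋖ x'_p = s and s ∧ t = y'₀ ⋖ ⋯ ⋖ y'_q = t with p + q = d(s,t) (a shortest path through the meet, a 'valley path'). -/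
/-! A topographically balanced lattice is weakly upper and weakly lower semimodular, and a finite
weakly semimodular lattice is semimodular: a cover `u ⋖ v` raises `s ⊔ u` by at most one rank.
Hence `u ↦ 2ρ(s ⊔ u) - ρ s - ρ u` vanishes at `s` and grows by at most one along each edge of the
cover graph, so `d(s, t) ≥ 2ρ(s ⊔ t) - ρ s - ρ t`; going up a saturated chain from `s` to `s ⊔ t`
and down one to `t` attains this bound. The meet is handled dually. -/

section Modularity

variable {α : Type*} [Lattice α]

/-- Birkhoff's argument: climb a saturated chain from `a` to `b`, pushing the cover
`a ⋖ a ⊔ x` up one step at a time with the diamond property. -/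
theorem covBy_sup_of_covBy_sup_of_le [IsWeakUpperModularLattice α] [WellFoundedLT α]
    [WellFoundedGT α] {a b x : α} (hab : a ≤ b) (ha : a ⋖ a ⊔ x) (hx : ¬x ≤ b) : b ⋖ b ⊔ x := by
  induction a using WellFoundedGT.induction with
  | _ a ih =>
  rcases hab.eq_or_lt with rfl | hlt
  · exact ha
  obtain ⟨c, hac, hcb⟩ := exists_covBy_le_of_lt hlt
  refine ih c hac.lt hcb ?_
  have hinf : c ⊓ (a ⊔ x) = a := by
    rcases hac.eq_or_eq (le_inf hac.le le_sup_left) inf_le_left with h | h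
    · exact h
    rcases ha.eq_or_eq hac.le (inf_eq_left.mp h) with h' | h'
    · exact absurd h' hac.ne'
    · exact absurd ((le_sup_right.trans h'.ge).trans hcb) hx
  have := covBy_sup_of_inf_covBy_of_inf_covBy_left (a := c) (b := a ⊔ x) (by rwa [hinf])
    (by rwa [hinf])
  rwa [← sup_assoc, sup_eq_left.mpr hac.le] at this

theorem IsUpperModularLattice.of_isWeakUpperModularLattice [IsWeakUpperModularLattice α]
    [WellFoundedLT α] [WellFoundedGT α] : IsUpperModularLattice α where
  covBy_sup_of_inf_covBy {a b} h := by
    have hab : ¬a ≤ b := fun hab => h.ne (inf_eq_left.mpr hab)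
    rw [sup_comm]
    exact covBy_sup_of_covBy_sup_of_le inf_le_right (by rwa [sup_eq_right.mpr inf_le_left]) hab

theorem IsLowerModularLattice.of_isWeakLowerModularLattice [IsWeakLowerModularLattice α]
    [WellFoundedLT α] [WellFoundedGT α] : IsLowerModularLattice α :=
  have : IsUpperModularLattice αᵒᵈ := .of_isWeakUpperModularLattice
  inferInstanceAs (IsLowerModularLattice αᵒᵈᵒᵈ)

theorem CovBy.sup_wcovBy_sup_left [IsUpperModularLattice α] {a b : α} (h : a ⋖ b) (c : α) :
    c ⊔ a ⩿ c ⊔ b := by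
  by_cases hb : b ≤ c ⊔ a
  · rw [le_antisymm (sup_le le_sup_left hb) (sup_le_sup_left h.le c)]
    exact .refl _
  · have hinf : (c ⊔ a) ⊓ b = a := by
      rcases h.eq_or_eq (le_inf le_sup_right h.le) inf_le_right with h' | h'
      · exact h'
      · exact absurd (inf_eq_right.mp h') hb
    have := covBy_sup_of_inf_covBy_right (hinf ▸ h)
    rw [sup_assoc, sup_eq_right.mpr h.le] at this
    exact this.wcovBy

theorem CovBy.inf_wcovBy_inf_left [IsLowerModularLattice α] {a b : α} (h : a ⋖ b) (c : α) :
    c ⊓ a ⩿ c ⊓ b :=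
  (h.toDual.sup_wcovBy_sup_left (OrderDual.toDual c)).ofDual

end Modularity

theorem TopBalanced.isWeakUpperModularLattice {L : Type*} [Lattice L] (h : TopBalanced L) :
    IsWeakUpperModularLattice L where
  covBy_sup_of_inf_covBy_covBy {a b} ha hb := by
    have hab : a ≠ b := fun hab => ha.ne (by rw [hab, inf_idem])
    obtain ⟨u, hau, hbu⟩ := (h.1 _ a b ha hb hab).exists
    rwa [hau.wcovBy.sup_eq hbu.wcovBy hab]

theorem TopBalanced.isWeakLowerModularLattice {L : Type*} [Lattice L] (h : TopBalanced L) :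
    IsWeakLowerModularLattice L where
  inf_covBy_of_covBy_covBy_sup {a b} ha hb := by
    have hab : a ≠ b := fun hab => ha.ne (by rw [hab, sup_idem])
    obtain ⟨v, hva, hvb⟩ := (h.2 a b _ ha hb hab).exists
    rwa [hva.wcovBy.inf_eq hvb.wcovBy hab]

section Chains

variable {α : Type*} [PartialOrder α]

theorem exists_covBy_chain [WellFoundedLT α] [WellFoundedGT α] {a b : α} (hab : a ≤ b) :
    ∃ (k : ℕ) (f : ℕ → α), f 0 = a ∧ f k = b ∧ ∀ j < k, f j ⋖ f (j + 1) := by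
  induction b using WellFoundedLT.induction with
  | _ b ih =>
  rcases hab.eq_or_lt with rfl | hlt
  · exact ⟨0, fun _ => a, rfl, rfl, by simp⟩
  obtain ⟨c, hac, hcb⟩ := exists_le_covBy_of_lt hlt
  obtain ⟨k, f, hf0, hfk, hf⟩ := ih c hcb.lt hac
  refine ⟨k + 1, Function.update f (k + 1) b, by simp [hf0], by simp, fun j hj => ?_⟩
  rcases (Nat.lt_succ_iff.mp hj).lt_or_eq with hjk | rfl
  · simpa [Function.update_of_ne (by omega : j ≠ k + 1),
      Function.update_of_ne (by omega : j + 1 ≠ k + 1)] using hf j hjk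
  · simpa [hfk] using hcb

variable {ρ : α → ℕ} (hρ : ∀ x y : α, x ⋖ y → ρ y = ρ x + 1)
include hρ

theorem rank_eq_add_of_covBy_chain {f : ℕ → α} {k : ℕ} (hf : ∀ j < k, f j ⋖ f (j + 1)) :
    ρ (f k) = ρ (f 0) + k := by
  induction k with
  | zero => rfl
  | succ k ih =>
    rw [hρ _ _ (hf k k.lt_succ_self), ih fun j hj => hf j (hj.trans k.lt_succ_self)]
    ring

theorem rank_mono [WellFoundedLT α] [WellFoundedGT α] : Monotone ρ := fun a b hab => by
  obtain ⟨k, f, rfl, rfl, hf⟩ := exists_covBy_chain hab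
  rw [rank_eq_add_of_covBy_chain hρ hf]
  exact Nat.le_add_right _ _

theorem exists_covBy_chain_length_eq_rank_sub [WellFoundedLT α] [WellFoundedGT α] {a b : α}
    (hab : a ≤ b) :
    ∃ f : ℕ → α, f 0 = a ∧ f (ρ b - ρ a) = b ∧ ∀ j < ρ b - ρ a, f j ⋖ f (j + 1) := by
  obtain ⟨k, f, rfl, rfl, hf⟩ := exists_covBy_chain hab
  rw [rank_eq_add_of_covBy_chain hρ hf, Nat.add_sub_cancel_left]
  exact ⟨f, rfl, rfl, hf⟩

theorem rank_le_add_one_of_wcovBy {a b : α} (hab : a ⩿ b) : ρ b ≤ ρ a + 1 := by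
  rcases hab.covBy_or_eq with h | rfl
  · exact (hρ _ _ h).le
  · exact Nat.le_succ _

end Chains

theorem SimpleGraph.Walk.le_add_length {V : Type*} {G : SimpleGraph V} {φ : V → ℕ}
    (hφ : ∀ x y, G.Adj x y → φ y ≤ φ x + 1) {u v : V} (w : G.Walk u v) :
    φ v ≤ φ u + w.length := by
  induction w with
  | nil => simp
  | cons h _ ih =>
    rw [SimpleGraph.Walk.length_cons]
    linarith [hφ _ _ h]

theorem SimpleGraph.Reachable.le_add_dist {V : Type*} {G : SimpleGraph V} {φ : V → ℕ}
    (hφ : ∀ x y, G.Adj x y → φ y ≤ φ x + 1) {u v : V} (h : G.Reachable u v) :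
    φ v ≤ φ u + G.dist u v := by
  obtain ⟨w, hw⟩ := h.exists_walk_length_eq_dist
  exact hw ▸ w.le_add_length hφ

section CoverGraph

variable {L : Type*} [Lattice L]

theorem exists_coverGraph_walk_of_covBy_chain {f : ℕ → L} {k : ℕ}
    (hf : ∀ j < k, f j ⋖ f (j + 1)) : ∃ w : (coverGraph L).Walk (f 0) (f k), w.length = k := by
  induction k with
  | zero => exact ⟨.nil, rfl⟩
  | succ k ih =>
    obtain ⟨w, hw⟩ := ih fun j hj => hf j (hj.trans k.lt_succ_self)
    have hadj : (coverGraph L).Adj (f k) (f (k + 1)) := Or.inl (hf k k.lt_succ_self)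
    exact ⟨w.concat hadj, by rw [SimpleGraph.Walk.length_concat, hw]⟩

variable [Finite L] {ρ : L → ℕ} (hρ : ∀ x y : L, x ⋖ y → ρ y = ρ x + 1)
include hρ

theorem exists_coverGraph_walk_length_eq_rank_sub {a b : L} (hab : a ≤ b) :
    ∃ w : (coverGraph L).Walk a b, w.length = ρ b - ρ a := by
  obtain ⟨f, rfl, hfb, hf⟩ := exists_covBy_chain_length_eq_rank_sub hρ hab
  obtain ⟨w, hw⟩ := exists_coverGraph_walk_of_covBy_chain hf
  exact ⟨w.copy rfl hfb, by rw [SimpleGraph.Walk.length_copy, hw]⟩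

theorem coverGraph_dist_eq_sup [IsUpperModularLattice L] (s t : L) :
    (coverGraph L).dist s t = ρ (s ⊔ t) - ρ s + (ρ (s ⊔ t) - ρ t) := by
  obtain ⟨ws, hws⟩ := exists_coverGraph_walk_length_eq_rank_sub hρ le_sup_left (b := s ⊔ t)
  obtain ⟨wt, hwt⟩ := exists_coverGraph_walk_length_eq_rank_sub hρ le_sup_right (b := s ⊔ t)
  let w := ws.append wt.reverse
  have hw : w.length = ρ (s ⊔ t) - ρ s + (ρ (s ⊔ t) - ρ t) := by
    rw [SimpleGraph.Walk.length_append, SimpleGraph.Walk.length_reverse, hws, hwt]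
  refine le_antisymm (hw ▸ SimpleGraph.dist_le w) ?_
  have hlip : ∀ u v : L, (coverGraph L).Adj u v →
      ρ (s ⊔ v) - ρ s + (ρ (s ⊔ v) - ρ v) ≤ ρ (s ⊔ u) - ρ s + (ρ (s ⊔ u) - ρ u) + 1 := by
    have hs := fun u : L => rank_mono hρ (le_sup_left : s ≤ s ⊔ u)
    have hu := fun u : L => rank_mono hρ (le_sup_right : u ≤ s ⊔ u)
    intro u v huv
    have := hs u; have := hu u; have := hs v; have := hu v
    rcases huv with huv | hvu
    · have := rank_le_add_one_of_wcovBy hρ (huv.sup_wcovBy_sup_left s)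
      have := hρ _ _ huv
      omega
    · have := rank_mono hρ (sup_le_sup_left hvu.le s)
      have := hρ _ _ hvu
      omega
  simpa using SimpleGraph.Reachable.le_add_dist hlip ⟨w⟩

theorem coverGraph_dist_eq_inf [IsLowerModularLattice L] (s t : L) :
    (coverGraph L).dist s t = ρ s - ρ (s ⊓ t) + (ρ t - ρ (s ⊓ t)) := by
  obtain ⟨ws, hws⟩ := exists_coverGraph_walk_length_eq_rank_sub hρ inf_le_left (a := s ⊓ t)
  obtain ⟨wt, hwt⟩ := exists_coverGraph_walk_length_eq_rank_sub hρ inf_le_right (a := s ⊓ t)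
  let w := ws.reverse.append wt
  have hw : w.length = ρ s - ρ (s ⊓ t) + (ρ t - ρ (s ⊓ t)) := by
    rw [SimpleGraph.Walk.length_append, SimpleGraph.Walk.length_reverse, hws, hwt]
  refine le_antisymm (hw ▸ SimpleGraph.dist_le w) ?_
  have hlip : ∀ u v : L, (coverGraph L).Adj u v →
      ρ s - ρ (s ⊓ v) + (ρ v - ρ (s ⊓ v)) ≤ ρ s - ρ (s ⊓ u) + (ρ u - ρ (s ⊓ u)) + 1 := by
    have hs := fun u : L => rank_mono hρ (inf_le_left : s ⊓ u ≤ s)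
    have hu := fun u : L => rank_mono hρ (inf_le_right : s ⊓ u ≤ u)
    intro u v huv
    have := hs u; have := hu u; have := hs v; have := hu v
    rcases huv with huv | hvu
    · have := rank_mono hρ (inf_le_inf_left s huv.le)
      have := hρ _ _ huv
      omega
    · have := rank_le_add_one_of_wcovBy hρ (hvu.inf_wcovBy_inf_left s)
      have := hρ _ _ hvu
      omega
  simpa using SimpleGraph.Reachable.le_add_dist hlip ⟨w⟩

end CoverGraph

theorem stmt_2 (L : Type*) [Lattice L] [OrderBot L] [Fintype L]
    (htb : TopBalanced L) (ρ : L → ℕ) (hρ : IsRankFunction L ρ) (s t : L) :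
    (∃ (m n : ℕ) (x y : ℕ → L),
      x 0 = s ∧ x m = s ⊔ t ∧ (∀ j < m, x j ⋖ x (j + 1)) ∧
      y 0 = t ∧ y n = s ⊔ t ∧ (∀ j < n, y j ⋖ y (j + 1)) ∧
      m + n = (coverGraph L).dist s t) ∧
    (∃ (p q : ℕ) (x y : ℕ → L),
      x 0 = s ⊓ t ∧ x p = s ∧ (∀ j < p, x j ⋖ x (j + 1)) ∧
      y 0 = s ⊓ t ∧ y q = t ∧ (∀ j < q, y j ⋖ y (j + 1)) ∧
      p + q = (coverGraph L).dist s t) := by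
  have := htb.isWeakUpperModularLattice
  have := htb.isWeakLowerModularLattice
  have : IsUpperModularLattice L := .of_isWeakUpperModularLattice
  have : IsLowerModularLattice L := .of_isWeakLowerModularLattice
  obtain ⟨-, hcov⟩ := hρ
  obtain ⟨x, hx0, hxm, hx⟩ := exists_covBy_chain_length_eq_rank_sub hcov le_sup_left (b := s ⊔ t)
  obtain ⟨y, hy0, hyn, hy⟩ := exists_covBy_chain_length_eq_rank_sub hcov le_sup_right (b := s ⊔ t)
  obtain ⟨x', hx'0, hx'p, hx'⟩ :=
    exists_covBy_chain_length_eq_rank_sub hcov inf_le_left (a := s ⊓ t)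
  obtain ⟨y', hy'0, hy'q, hy'⟩ :=
    exists_covBy_chain_length_eq_rank_sub hcov inf_le_right (a := s ⊓ t)
  exact ⟨⟨_, _, x, y, hx0, hxm, hx, hy0, hyn, hy, (coverGraph_dist_eq_sup hcov s t).symm⟩,
    ⟨_, _, x', y', hx'0, hx'p, hx', hy'0, hy'q, hy', (coverGraph_dist_eq_inf hcov s t).symm⟩⟩
end

section
/- Let L be a finite modular lattice with a diamond coloring c by a set I, and let s ≤ t in L. If s = r₀ ⋖ r₁ ⋖ ⋯ ⋖ r_p = t and s = r'₀ ⋖ r'₁ ⋖ ⋯ ⋖ r'_q = t are two saturated chains from s to t, then p = q, and for every color i ∈ I the number of indices j with c(r_{j−1}, r_j) = i equals the number of indices j with c(r'_{j−1}, r'_j) = i. -/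
/-- A diamond coloring of (the cover edges of) a lattice: in any diamond
`v ⋖ s, v ⋖ t, s ⋖ u, t ⋖ u` with `s ≠ t`, opposite edges have equal colors. -/
def IsDiamondColoring {L I : Type*} [Lattice L] (c : L → L → I) : Prop :=
  ∀ v s t u : L, v ⋖ s → v ⋖ t → s ⋖ u → t ⋖ u → s ≠ t →
    c v s = c t u ∧ c v t = c s u

section JHAux

variable {L I : Type*}

private lemma jh_chainLe [PartialOrder L] {r : ℕ → L} {p : ℕ}
    (hr : ∀ j < p, r j ⋖ r (j + 1)) :
    ∀ {a b : ℕ}, a ≤ b → b ≤ p → r a ≤ r b := by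
  intro a b
  induction b with
  | zero => intro h _; interval_cases a; rfl
  | succ n ih =>
    intro hab hbp
    rcases Nat.lt_or_ge a (n + 1) with h | h
    · exact le_trans (ih (Nat.lt_succ_iff.mp h) (by omega)) (hr n (by omega)).le
    · have : a = n + 1 := le_antisymm hab h
      subst this; rfl

private lemma jh_exists_covBy_le [PartialOrder L] [Finite L] {u t : L} (h : u < t) :
    ∃ v, u ⋖ v ∧ v ≤ t := by
  obtain ⟨v, ⟨huv, hvt⟩, hmin⟩ :=
    (wellFounded_lt (α := L)).has_min {x : L | u < x ∧ x ≤ t} ⟨t, h, le_rfl⟩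
  exact ⟨v, ⟨huv, fun z hz hzv => hmin z ⟨hz, hzv.le.trans hvt⟩ hzv⟩, hvt⟩

private lemma jh_exists_satChain [PartialOrder L] [Finite L] :
    ∀ n : ℕ, ∀ u t : L, u ≤ t → (Set.Ioc u t).ncard ≤ n →
      ∃ m, ∃ w : ℕ → L, w 0 = u ∧ w m = t ∧ ∀ j < m, w j ⋖ w (j + 1) := by
  intro n
  induction n with
  | zero =>
    intro u t hut hcard
    rcases eq_or_lt_of_le hut with rfl | hlt
    · exact ⟨0, fun _ => u, rfl, rfl, by omega⟩
    · exfalso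
      have hne : (Set.Ioc u t).Nonempty := ⟨t, hlt, le_rfl⟩
      have := (Set.ncard_pos (Set.toFinite _)).mpr hne
      omega
  | succ n ih =>
    intro u t hut hcard
    rcases eq_or_lt_of_le hut with rfl | hlt
    · exact ⟨0, fun _ => u, rfl, rfl, by omega⟩
    · obtain ⟨v, huv, hvt⟩ := jh_exists_covBy_le hlt
      have hss : Set.Ioc v t ⊂ Set.Ioc u t := by
        constructor
        · intro x hx; exact ⟨huv.lt.trans hx.1, hx.2⟩
        · intro hsub
          have : v ∈ Set.Ioc v t := hsub ⟨huv.lt, hvt⟩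
          exact absurd this.1 (lt_irrefl v)
      have hlt' : (Set.Ioc v t).ncard < (Set.Ioc u t).ncard :=
        Set.ncard_lt_ncard hss (Set.toFinite _)
      obtain ⟨m, w, hw0, hwm, hw⟩ := ih v t hvt (by omega)
      refine ⟨m + 1, fun j => if j = 0 then u else w (j - 1), by simp, by simp [hwm], ?_⟩
      intro j hj
      rcases Nat.eq_zero_or_pos j with rfl | hpos
      · simpa [hw0] using huv
      · have h1 : j ≠ 0 := hpos.ne'
        have h2 : j + 1 ≠ 0 := by omega
        simp only [h1, h2, if_false]
        have h3 : j + 1 - 1 = (j - 1) + 1 := by omega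
        rw [h3]
        exact hw (j - 1) (by omega)

/-- The multiset of edge colors of a chain of length `p`. -/
private def jh_chainColors (p : ℕ) (f : ℕ → I) : Multiset I := ((List.range p).map f : List I)

private lemma jh_chainColors_succ (p : ℕ) (f : ℕ → I) :
    jh_chainColors (p + 1) f = f 0 ::ₘ jh_chainColors p (fun j => f (j + 1)) := by
  simp only [jh_chainColors, List.range_succ_eq_map, List.map_cons, List.map_map,
    Multiset.cons_coe]
  rfl

private lemma jh_key [Lattice L] [IsModularLattice L] [Finite L]
    (c : L → L → I) (hc : IsDiamondColoring c) :
    ∀ p : ℕ, ∀ s t : L, ∀ r r' : ℕ → L, ∀ q : ℕ,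
      r 0 = s → r p = t → (∀ j < p, r j ⋖ r (j + 1)) →
      r' 0 = s → r' q = t → (∀ j < q, r' j ⋖ r' (j + 1)) →
      p = q ∧ jh_chainColors p (fun j => c (r j) (r (j + 1))) =
        jh_chainColors q (fun j => c (r' j) (r' (j + 1))) := by
  intro p
  induction p using Nat.strong_induction_on with
  | _ p IH =>
  intro s t r r' q hr0 hrp hr hr'0 hr'q hr'
  rcases p with _ | p
  · -- length 0 : s = t, so q = 0
    have hst : s = t := hr0 ▸ hrp
    have hq : q = 0 := by
      by_contra hq
      have h1 : r' 0 < r' 1 := (hr' 0 (by omega)).lt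
      have h2 : r' 1 ≤ r' q := jh_chainLe hr' (by omega) le_rfl
      rw [hr'0, hst] at h1
      rw [hr'q] at h2
      exact absurd (h1.trans_le h2) (lt_irrefl t)
    subst hq
    exact ⟨rfl, rfl⟩
  · -- p = p' + 1; q > 0
    have hq0 : q ≠ 0 := by
      rintro rfl
      have hst' : s = t := hr'0 ▸ hr'q
      have h1 : r 0 < r 1 := (hr 0 (by omega)).lt
      have h2 : r 1 ≤ r (p + 1) := jh_chainLe hr (by omega) le_rfl
      rw [hr0, hst'] at h1
      rw [hrp] at h2
      exact absurd (h1.trans_le h2) (lt_irrefl t)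
    obtain ⟨q', rfl⟩ : ∃ q', q = q' + 1 := ⟨q - 1, by omega⟩
    by_cases h11 : r 1 = r' 1
    · -- same first step
      obtain ⟨hpq, hcol⟩ := IH p (by omega) (r 1) t (fun j => r (j + 1)) (fun j => r' (j + 1)) q'
        rfl hrp (fun j hj => hr (j + 1) (by omega))
        h11.symm hr'q (fun j hj => hr' (j + 1) (by omega))
      refine ⟨by omega, ?_⟩
      rw [jh_chainColors_succ, jh_chainColors_succ, hcol, hr0, hr'0, h11]
    · -- different first steps: use the diamond
      have hsr1 : s ⋖ r 1 := hr0 ▸ hr 0 (by omega)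
      have hsr'1 : s ⋖ r' 1 := hr'0 ▸ hr' 0 (by omega)
      have hinf : r 1 ⊓ r' 1 = s := by
        by_contra h
        have hs : s < r 1 ⊓ r' 1 :=
          lt_of_le_of_ne (le_inf hsr1.lt.le hsr'1.lt.le) (Ne.symm h)
        have h1 : r 1 ⊓ r' 1 = r 1 := by
          rcases lt_or_eq_of_le (inf_le_left : r 1 ⊓ r' 1 ≤ r 1) with h' | h'
          · exact absurd h' (hsr1.2 hs)
          · exact h'
        have hle : r 1 ≤ r' 1 := h1 ▸ inf_le_right
        refine h11 (le_antisymm hle ?_)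
        rcases lt_or_eq_of_le hle with h' | h'
        · exact absurd h' (hsr'1.2 (hsr1.lt))
        · exact h'.ge
      set u : L := r 1 ⊔ r' 1 with hu
      have hr1u : r 1 ⋖ u := covBy_sup_of_inf_covBy_right (hinf ▸ hsr'1)
      have hr'1u : r' 1 ⋖ u := covBy_sup_of_inf_covBy_left (hinf ▸ hsr1)
      have hut : u ≤ t := by
        have ha : r 1 ≤ t := hrp ▸ jh_chainLe hr (by omega) le_rfl
        have hb : r' 1 ≤ t := hr'q ▸ jh_chainLe hr' (by omega) le_rfl
        exact sup_le ha hb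
      obtain ⟨m, w, hw0, hwm, hw⟩ :=
        jh_exists_satChain (Set.Ioc u t).ncard u t hut le_rfl
      -- chain from r 1 through u to t
      have mkChain : ∀ x : L, x ⋖ u →
          ∃ w2 : ℕ → L, w2 0 = x ∧ w2 (m + 1) = t ∧
            (∀ j < m + 1, w2 j ⋖ w2 (j + 1)) ∧
            c (w2 0) (w2 (0 + 1)) = c x u ∧
            (fun j => c (w2 (j + 1)) (w2 (j + 1 + 1))) = fun j => c (w j) (w (j + 1)) := by
        intro x hx
        refine ⟨fun j => if j = 0 then x else w (j - 1), rfl, by simp [hwm], ?_, by simp [hw0], ?_⟩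
        · intro j hj
          rcases Nat.eq_zero_or_pos j with rfl | hpos
          · simpa [hw0] using hx
          · have h1 : j ≠ 0 := hpos.ne'
            have h2 : j + 1 ≠ 0 := by omega
            simp only [h1, h2, if_false]
            have h3 : j + 1 - 1 = (j - 1) + 1 := by omega
            rw [h3]
            exact hw (j - 1) (by omega)
        · funext j
          simp only [Nat.succ_ne_zero, if_false]
          norm_num
      obtain ⟨w2, hw20, hw2m, hw2, hw2c0, hw2ct⟩ := mkChain (r 1) hr1u
      obtain ⟨hpm, hcol1⟩ := IH p (by omega) (r 1) t (fun j => r (j + 1)) w2 (m + 1)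
        rfl hrp (fun j hj => hr (j + 1) (by omega)) hw20 hw2m hw2
      obtain ⟨w2', hw2'0, hw2'm, hw2', hw2'c0, hw2'ct⟩ := mkChain (r' 1) hr'1u
      obtain ⟨hpq, hcol2⟩ := IH p (by omega) (r' 1) t w2' (fun j => r' (j + 1)) q'
        hw2'0 (hpm ▸ hw2'm) (fun j hj => hw2' j (by omega))
        rfl hr'q (fun j hj => hr' (j + 1) (by omega))
      refine ⟨by omega, ?_⟩
      obtain ⟨hd1, hd2⟩ := hc s (r 1) (r' 1) u hsr1 hsr'1 hr1u hr'1u h11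
      -- expand everything
      rw [jh_chainColors_succ, jh_chainColors_succ, hcol1, hr0, hr'0, ← hcol2, hpm,
        jh_chainColors_succ, jh_chainColors_succ]
      simp only [hw2ct, hw2'ct]
      rw [hw2c0, hw2'c0, hd1, hd2]
      exact Multiset.cons_swap _ _ _

private lemma jh_ncard_eq_count [DecidableEq I] (p : ℕ) (f : ℕ → I) (i : I) :
    Set.ncard {j : ℕ | j < p ∧ f j = i} = Multiset.count i (jh_chainColors p f) := by
  have h1 : {j : ℕ | j < p ∧ f j = i} = ↑((Finset.range p).filter (fun j => f j = i)) := by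
    ext j; simp [Finset.mem_filter]
  rw [h1, Set.ncard_coe_finset]
  have h2 : jh_chainColors p f = Multiset.map f (Finset.range p).val := by
    simp [jh_chainColors, Finset.range, Multiset.range]
  rw [h2, Multiset.count_map]
  rw [Finset.card, Finset.filter_val]
  congr 1
  exact Multiset.filter_congr (fun x _ => by simp [eq_comm])

end JHAux

theorem stmt_3 {L I : Type*} [Lattice L] [IsModularLattice L] [Fintype L]
    (c : L → L → I) (hc : IsDiamondColoring c)
    (s t : L) (hst : s ≤ t) (p q : ℕ) (r r' : ℕ → L)
    (hr0 : r 0 = s) (hrp : r p = t) (hr : ∀ j < p, r j ⋖ r (j + 1))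
    (hr'0 : r' 0 = s) (hr'q : r' q = t) (hr' : ∀ j < q, r' j ⋖ r' (j + 1)) :
    p = q ∧ ∀ i : I,
      Set.ncard {j : ℕ | j < p ∧ c (r j) (r (j + 1)) = i} =
      Set.ncard {j : ℕ | j < q ∧ c (r' j) (r' (j + 1)) = i} := by
  classical
  obtain ⟨hpq, hM⟩ := jh_key c hc p s t r r' q hr0 hrp hr hr'0 hr'q hr'
  refine ⟨hpq, fun i => ?_⟩
  rw [jh_ncard_eq_count, jh_ncard_eq_count, hM]
end

section
/- Let L be a finite distributive lattice with a diamond coloring c by a set I. Let P be the set of join-irreducible elements of L with the induced order, and color each x ∈ P by κ(x) := c(x', x), where x' is the unique element of L covered by x. Then the map φ(z) := {p ∈ P : p ≤ z} is an order isomorphism from L onto the lattice of lower sets of P, and it preserves edge colors: for every covering pair x ⋖ y in L, if φ(y) \ φ(x) = {v} then c(x,y) = κ(v). -/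
/-!
The isomorphism is Birkhoff's representation theorem (`OrderIso.lowerSetSupIrred`), once
`JoinIrred` is identified with Mathlib's `SupIrred`.

For the colors: if `φ y \ φ x = {v}` and `v' ⋖ v`, then `y = x ⊔ v` and `v' ≤ x`. In a modular
lattice, whenever `v' ≤ z ⋖ w` and `v ≰ w`, the covers `z ⋖ w`, `z ⋖ z ⊔ v`, `w ⋖ w ⊔ v` and
`z ⊔ v ⋖ w ⊔ v` form a diamond, so the color of `z ⋖ z ⊔ v` stays `c v' v` as `z` climbs from
`v'` up to `x`.
-/

/-- An element of a lattice with a least element is join irreducible if it is not the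
minimum and cannot be written as a join of two other elements. -/
def JoinIrred {L : Type*} [Lattice L] [OrderBot L] (x : L) : Prop :=
  x ≠ ⊥ ∧ ∀ y z : L, x = y ⊔ z → x = y ∨ x = z

/-- The lower set of join irreducibles below a given element `z`. -/
def joinIrredLowerSet {L : Type*} [Lattice L] [OrderBot L] (z : L) :
    LowerSet {x : L // JoinIrred x} :=
  ⟨{p | p.val ≤ z}, fun _ _ hba ha => le_trans (Subtype.coe_le_coe.mpr hba) ha⟩

theorem joinIrred_iff_supIrred {L : Type*} [Lattice L] [OrderBot L] {x : L} :
    JoinIrred x ↔ SupIrred x :=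
  ⟨fun ⟨hbot, hsup⟩ => ⟨fun h => hbot h.eq_bot,
      fun _ _ hbd => (hsup _ _ hbd.symm).imp Eq.symm Eq.symm⟩,
    fun ⟨hmin, hsup⟩ => ⟨fun h => hmin (h ▸ isMin_bot),
      fun _ _ hbd => (hsup hbd.symm).imp Eq.symm Eq.symm⟩⟩

section Birkhoff

variable {L : Type*} [DistribLattice L] [OrderBot L] [Fintype L]

open Classical in
noncomputable def joinIrredLowerSetIso : L ≃o LowerSet {x : L // JoinIrred x} :=
  OrderIso.lowerSetSupIrred.trans <| LowerSet.map <|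
    OrderIso.setCongr {x : L | SupIrred x} {x | JoinIrred x}
      (Set.ext fun _ => joinIrred_iff_supIrred.symm)

theorem coe_joinIrredLowerSetIso : ⇑(joinIrredLowerSetIso (L := L)) = joinIrredLowerSet := by
  funext z
  ext p
  exact LowerSet.mem_map.trans Iff.rfl

theorem joinIrredLowerSet_bijective : Function.Bijective (joinIrredLowerSet (L := L)) :=
  coe_joinIrredLowerSetIso (L := L) ▸ joinIrredLowerSetIso.bijective

theorem joinIrredLowerSet_le_joinIrredLowerSet {z w : L} :
    joinIrredLowerSet z ≤ joinIrredLowerSet w ↔ z ≤ w :=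
  coe_joinIrredLowerSetIso (L := L) ▸ joinIrredLowerSetIso.le_iff_le

end Birkhoff

section Diamond

variable {L : Type*} [Lattice L] {v' v x : L}

theorem CovBy.inf_eq_of_le_of_not_le (hv : v' ⋖ v) (hx : v' ≤ x) (hvx : ¬ v ≤ x) :
    x ⊓ v = v' :=
  (hv.eq_or_eq (le_inf hx hv.le) inf_le_right).resolve_right fun h => hvx (inf_eq_right.mp h)

variable [IsModularLattice L]

theorem CovBy.covBy_sup_of_le_of_not_le (hv : v' ⋖ v) (hx : v' ≤ x) (hvx : ¬ v ≤ x) :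
    x ⋖ x ⊔ v :=
  covBy_sup_of_inf_covBy_right (hv.inf_eq_of_le_of_not_le hx hvx ▸ hv)

theorem IsDiamondColoring.apply_sup_eq [Finite L] {I : Type*} {c : L → L → I}
    (hc : IsDiamondColoring c) (hv : v' ⋖ v) (hx : v' ≤ x) (hvx : ¬ v ≤ x) :
    c x (x ⊔ v) = c v' v := by
  induction x using WellFoundedLT.induction with
  | ind x ih =>
  obtain rfl | hlt := hx.eq_or_lt
  · rw [sup_eq_right.mpr hv.le]
  obtain ⟨z, hz, hzx⟩ := exists_le_covBy_of_lt hlt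
  have hvz : ¬ v ≤ z := fun h => hvx (h.trans hzx.le)
  have hzv_inf : (z ⊔ v) ⊓ x = z := by
    rw [sup_inf_assoc_of_le v hzx.le, inf_comm, hv.inf_eq_of_le_of_not_le hx hvx,
      sup_eq_left.mpr hz]
  have hzv_covBy : z ⊔ v ⋖ x ⊔ v := by
    have h := covBy_sup_of_inf_covBy_right (hzv_inf ▸ hzx)
    rwa [sup_right_comm, sup_eq_right.mpr hzx.le] at h
  have hne : x ≠ z ⊔ v := fun h => hvx (h ▸ le_sup_right)
  have hdiamond := hc z x (z ⊔ v) (x ⊔ v) hzx (hv.covBy_sup_of_le_of_not_le hz hvz)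
    (hv.covBy_sup_of_le_of_not_le hx hvx) hzv_covBy hne
  exact hdiamond.2.symm.trans (ih z hzx.lt hz hvz)

end Diamond

theorem stmt_8 {L I : Type*} [DistribLattice L] [OrderBot L] [Fintype L]
    (c : L → L → I) (hc : IsDiamondColoring c) :
    Function.Bijective (joinIrredLowerSet (L := L)) ∧
    (∀ z w : L, z ≤ w ↔ joinIrredLowerSet z ≤ joinIrredLowerSet w) ∧
    (∀ x y : L, x ⋖ y → ∀ v : {x : L // JoinIrred x},
      ((joinIrredLowerSet y : Set {x : L // JoinIrred x}) \
        (joinIrredLowerSet x : Set {x : L // JoinIrred x}) = {v}) →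
      ∀ v' : L, v' ⋖ v.val → c x y = c v' v.val) := by
  refine ⟨joinIrredLowerSet_bijective, fun _ _ => joinIrredLowerSet_le_joinIrredLowerSet.symm,
    ?_⟩
  intro x y hxy v hdiff v' hv'
  have hv : v.val ≤ y ∧ ¬ v.val ≤ x := (Set.ext_iff.mp hdiff v).mpr rfl
  have hy : x ⊔ v.val = y :=
    (hxy.eq_or_eq le_sup_left (sup_le hxy.le hv.1)).resolve_left fun h => hv.2 (h ▸ le_sup_right)
  have hv'x : v' ≤ x := by
    refine joinIrredLowerSet_le_joinIrredLowerSet.mp fun p hp => ?_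
    by_contra hpx
    have hpv : p = v := by
      rw [← Set.mem_singleton_iff, ← hdiff]
      exact ⟨hp.trans (hv'.le.trans hv.1), hpx⟩
    exact hv'.lt.not_ge (hpv ▸ hp)
  rw [← hy]
  exact hc.apply_sup_eq hv' hv'x hv.2
end

section
/- Let L be a finite graded distributive lattice and let K be a full-length sublattice of L. Then for every join-irreducible element x of L, the set {y ∈ K : x ≤ y} has a unique minimal element w_x, and w_x is a join-irreducible element of the lattice K. -/
/-!
Both ranks increase by one along covers, and a cover in `K` is a strict inequality in `L`, so
going up a maximal chain of `K` the rank of `L` grows at least as fast as that of `K`. Since `K`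
has full length this forces `K` to contain `⊥` and `⊤`. Then `{y ∈ K | x ≤ y}` is nonempty and
closed under meets, so it has a least element `w`. In a distributive lattice a join-irreducible
`x` is join-prime, so `w = y ⊔ z` with `y, z ∈ K` gives `x ≤ y` or `x ≤ z`, and minimality of `w`
turns this into `w = y` or `w = z`.
-/

/-- `CovByIn K x y`: `y` covers `x` within the subposet `K` (induced order). -/
def CovByIn {L : Type*} [Lattice L] (K : Set L) (x y : L) : Prop :=
  x ∈ K ∧ y ∈ K ∧ x < y ∧ ∀ z ∈ K, x < z → ¬ z < y

/-- Join irreducibility within a sublattice `K` whose minimum element is `mK`. -/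
def JoinIrredIn {L : Type*} [Lattice L] (K : Set L) (mK : L) (w : L) : Prop :=
  w ∈ K ∧ w ≠ mK ∧ ∀ y ∈ K, ∀ z ∈ K, w = y ⊔ z → w = y ∨ w = z

theorem exists_le_covByIn_of_lt {L : Type*} [Lattice L] [WellFoundedGT L] {K : Set L} {u w : L}
    (hu : u ∈ K) (hw : w ∈ K) (huw : u < w) : ∃ v, u ≤ v ∧ CovByIn K v w := by
  obtain ⟨v, hv⟩ :=
    exists_maximal_of_wellFoundedGT (fun v => v ∈ K ∧ u ≤ v ∧ v < w) ⟨u, hu, le_rfl, huw⟩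
  obtain ⟨⟨hvK, huv, hvw⟩, hv_max⟩ := maximal_iff_forall_gt.mp hv
  exact ⟨v, huv, hvK, hw, hvw, fun z hzK hvz hzw => hv_max hvz ⟨hzK, huv.trans hvz.le, hzw⟩⟩

theorem rankIn_add_le_add_rank {L : Type*} [Lattice L] [Finite L] {ρL ρK : L → ℕ}
    (hρL : StrictMono ρL) {K : Set L} (hKcov : ∀ x y : L, CovByIn K x y → ρK y = ρK x + 1)
    {u : L} (hu : u ∈ K) : ∀ w ∈ K, u ≤ w → ρK w + ρL u ≤ ρK u + ρL w := by
  intro w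
  induction w using WellFoundedLT.induction with
  | _ w ih =>
    intro hw huw
    rcases huw.eq_or_lt with rfl | huw
    · rfl
    obtain ⟨v, huv, hvw⟩ := exists_le_covByIn_of_lt hu hw huw
    have ih_v := ih v hvw.2.2.1 hvw.1 huv
    have hK_step := hKcov v w hvw
    have hL_step := hρL hvw.2.2.1
    omega

theorem eq_bot_and_eq_top_of_full_length {L : Type*} [Lattice L] [BoundedOrder L] [Finite L]
    {ρL ρK : L → ℕ} (hρL : StrictMono ρL) (hbot : ρL ⊥ = 0) {K : Set L}
    (hKcov : ∀ x y : L, CovByIn K x y → ρK y = ρK x + 1) {mK MK : L} (hmK : mK ∈ K)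
    (hMK : MK ∈ K) (hmin : ∀ x ∈ K, mK ≤ x) (hKbot : ρK mK = 0) (hlen : ρK MK = ρL ⊤) :
    mK = ⊥ ∧ MK = ⊤ := by
  have hchain := rankIn_add_le_add_rank hρL hKcov hmK MK hMK (hmin MK hMK)
  have hMK_le := hρL.monotone (le_top : MK ≤ ⊤)
  constructor
  · by_contra hne
    have := hρL (bot_lt_iff_ne_bot.mpr hne)
    omega
  · by_contra hne
    have := hρL (lt_top_iff_ne_top.mpr hne)
    omega

theorem JoinIrred.supIrred {L : Type*} [Lattice L] [OrderBot L] {x : L} (hx : JoinIrred x) :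
    SupIrred x :=
  ⟨fun h => hx.1 h.eq_bot, fun _ _ h => (hx.2 _ _ h.symm).imp Eq.symm Eq.symm⟩

theorem minimal_mem_and_le_iff {L : Type*} [Preorder L] {K : Set L} {x w : L} :
    Minimal (fun y => y ∈ K ∧ x ≤ y) w ↔ w ∈ K ∧ x ≤ w ∧ ∀ y ∈ K, x ≤ y → ¬ y < w := by
  rw [minimal_iff_forall_lt, and_assoc]
  exact and_congr_right fun _ => and_congr_right fun _ =>
    ⟨fun h y hy hxy hyw => h hyw ⟨hy, hxy⟩, fun h y hyw hy => h y hy.1 hy.2 hyw⟩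

theorem Minimal.eq_of_infClosed {L : Type*} [SemilatticeInf L] {K : Set L} (hK : InfClosed K)
    {x w₁ w₂ : L} (h₁ : Minimal (fun y => y ∈ K ∧ x ≤ y) w₁)
    (h₂ : Minimal (fun y => y ∈ K ∧ x ≤ y) w₂) : w₁ = w₂ := by
  have hinf : w₁ ⊓ w₂ ∈ K ∧ x ≤ w₁ ⊓ w₂ :=
    ⟨hK h₁.prop.1 h₂.prop.1, le_inf h₁.prop.2 h₂.prop.2⟩
  exact (h₁.eq_of_le hinf inf_le_left).symm.trans (h₂.eq_of_le hinf inf_le_right)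

theorem SupPrime.joinIrredIn_of_minimal {L : Type*} [Lattice L] [OrderBot L] {K : Set L}
    {x w : L} (hx : SupPrime x) (hw : Minimal (fun y => y ∈ K ∧ x ≤ y) w) :
    JoinIrredIn K ⊥ w := by
  refine ⟨hw.prop.1, fun h => hx.ne_bot (le_bot_iff.mp (h ▸ hw.prop.2)), ?_⟩
  intro y hy z hz hwyz
  rcases hx.le_sup.mp (hwyz ▸ hw.prop.2) with hxy | hxz
  · exact Or.inl (hw.eq_of_le ⟨hy, hxy⟩ (hwyz ▸ le_sup_left)).symm
  · exact Or.inr (hw.eq_of_le ⟨hz, hxz⟩ (hwyz ▸ le_sup_right)).symm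

theorem stmt_12_general {L : Type*} [DistribLattice L] [BoundedOrder L] [Fintype L]
    (ρL : L → ℕ) (hbot : ρL ⊥ = 0) (hcov : ∀ x y : L, x ⋖ y → ρL y = ρL x + 1)
    (K : Set L) (hK : ∀ x ∈ K, ∀ y ∈ K, x ⊔ y ∈ K ∧ x ⊓ y ∈ K)
    (mK MK : L) (hmK : mK ∈ K) (hMK : MK ∈ K)
    (hmin : ∀ x ∈ K, mK ≤ x)
    (ρK : L → ℕ) (hKbot : ρK mK = 0)
    (hKcov : ∀ x y : L, CovByIn K x y → ρK y = ρK x + 1)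
    (hlen : ρK MK = ρL ⊤) :
    ∀ x : L, JoinIrred x →
      (∃! w : L, w ∈ K ∧ x ≤ w ∧ ∀ y ∈ K, x ≤ y → ¬ y < w) ∧
      (∀ w : L, (w ∈ K ∧ x ≤ w ∧ ∀ y ∈ K, x ≤ y → ¬ y < w) → JoinIrredIn K mK w) := by
  classical
  let := Fintype.toLocallyFiniteOrder (α := L)
  have hρL : StrictMono ρL :=
    (strictMono_iff_forall_covBy ρL).2 fun a b h => by rw [hcov a b h]; exact Nat.lt_succ_self _
  obtain ⟨rfl, rfl⟩ :=
    eq_bot_and_eq_top_of_full_length hρL hbot hKcov hmK hMK hmin hKbot hlen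
  have hKinf : InfClosed K := fun a ha b hb => (hK a ha b hb).2
  intro x hx
  simp only [← minimal_mem_and_le_iff]
  obtain ⟨w, hw⟩ := exists_minimal_of_wellFoundedLT (fun y => y ∈ K ∧ x ≤ y) ⟨⊤, hMK, le_top⟩
  exact ⟨⟨w, hw, fun w' hw' => hw'.eq_of_infClosed hKinf hw⟩,
    fun w' hw' => hx.supIrred.supPrime.joinIrredIn_of_minimal hw'⟩

theorem stmt_12 {L : Type*} [DistribLattice L] [BoundedOrder L] [Fintype L]
    (ρL : L → ℕ) (hbot : ρL ⊥ = 0) (hcov : ∀ x y : L, x ⋖ y → ρL y = ρL x + 1)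
    (K : Set L) (hK : ∀ x ∈ K, ∀ y ∈ K, x ⊔ y ∈ K ∧ x ⊓ y ∈ K)
    (mK MK : L) (hmK : mK ∈ K) (hMK : MK ∈ K)
    (hmin : ∀ x ∈ K, mK ≤ x) (hmax : ∀ x ∈ K, x ≤ MK)
    (ρK : L → ℕ) (hKbot : ρK mK = 0)
    (hKcov : ∀ x y : L, CovByIn K x y → ρK y = ρK x + 1)
    (hlen : ρK MK = ρL ⊤) :
    ∀ x : L, JoinIrred x →
      (∃! w : L, w ∈ K ∧ x ≤ w ∧ ∀ y ∈ K, x ≤ y → ¬ y < w) ∧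
      (∀ w : L, (w ∈ K ∧ x ≤ w ∧ ∀ y ∈ K, x ≤ y → ¬ y < w) → JoinIrredIn K mK w) :=
  stmt_12_general ρL hbot hcov K hK mK MK hmK hMK hmin ρK hKbot hKcov hlen
end

section
/- Let L be a finite modular lattice with a diamond coloring c by a set I, and let s, t ∈ L. Then any two shortest paths from s to t in the cover graph of L have, for each color i ∈ I, the same number of edges of color i. -/
open SimpleGraph

section Height

variable {α : Type*} [PartialOrder α] [Fintype α]

lemma height_lt_top_of_fintype (x : α) : Order.height x < ⊤ :=
  (Order.height_le (n := Fintype.card α) fun p _ => by exact_mod_cast p.length_lt_card.le).trans_lt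
    (ENat.natCast_lt_top _)

noncomputable def natHeight (x : α) : ℕ := (Order.height x).toNat

lemma natCast_natHeight (x : α) : (natHeight x : ℕ∞) = Order.height x :=
  ENat.natCast_toNat (height_lt_top_of_fintype x).ne

lemma natHeight_strictMono : StrictMono (natHeight (α := α)) := fun x y h => by
  have := Order.height_strictMono h (height_lt_top_of_fintype x)
  rwa [← natCast_natHeight, ← natCast_natHeight, Nat.cast_lt] at this

lemma eq_of_le_of_natHeight_le {x y : α} (h : x ≤ y) (hxy : natHeight y ≤ natHeight x) :
    x = y :=
  h.eq_of_not_lt fun hlt => (natHeight_strictMono hlt).not_ge hxy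

lemma exists_covBy_natHeight_eq_add_one {x y : α} (h : x < y) :
    ∃ z, z ⋖ y ∧ natHeight y = natHeight z + 1 := by
  obtain ⟨n, hn⟩ := Nat.exists_eq_add_one.2 ((Nat.zero_le _).trans_lt (natHeight_strictMono h))
  have hy : Order.height y = n + 1 := by rw [← natCast_natHeight, hn]; push_cast; rfl
  obtain ⟨-, ⟨z, hzy, hz⟩, hle⟩ := Order.height_eq_coe_add_one_iff.1 hy
  have hzn : natHeight z = n := by exact_mod_cast (natCast_natHeight z).trans hz
  refine ⟨z, ⟨hzy, fun w hzw hwy => ?_⟩, by rw [hn, hzn]⟩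
  have hw : natHeight w ≤ n := by exact_mod_cast (natCast_natHeight w).trans_le (hle w hwy)
  exact (natHeight_strictMono hzw).not_ge (hzn ▸ hw)

end Height

def IsHasseWalk {α : Type*} [PartialOrder α] (p : ℕ → α) (n : ℕ) : Prop :=
  ∀ j < n, (hasse α).Adj (p j) (p (j + 1))

section HasseWalk

variable {α : Type*} [PartialOrder α] {p : ℕ → α} {n : ℕ}

lemma IsHasseWalk.tail (h : IsHasseWalk p (n + 1)) : IsHasseWalk (fun j => p (j + 1)) n :=
  fun j hj => h (j + 1) (by omega)

lemma IsHasseWalk.of_succ (h : IsHasseWalk p (n + 1)) : IsHasseWalk p n :=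
  fun j hj => h j (by omega)

lemma isHasseWalk_getVert {x y : α} (w : (hasse α).Walk x y) : IsHasseWalk w.getVert w.length :=
  fun _ hj => w.adj_getVert_succ hj

end HasseWalk

section Coloring

variable {α I : Type*} [PartialOrder α]

open Classical in
noncomputable def edgeColor (c : α → α → I) (x y : α) : I := if x ⋖ y then c x y else c y x

noncomputable def walkColors (c : α → α → I) (p : ℕ → α) (n : ℕ) : Multiset I :=
  (Multiset.range n).map fun j => edgeColor c (p j) (p (j + 1))

variable {c : α → α → I}

lemma edgeColor_of_covBy {x y : α} (h : x ⋖ y) : edgeColor c x y = c x y := if_pos h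

lemma edgeColor_of_covBy' {x y : α} (h : y ⋖ x) : edgeColor c x y = c y x :=
  if_neg fun h' => h.lt.not_gt h'.lt

lemma edgeColor_eq_iff {x y : α} (h : (hasse α).Adj x y) (i : I) :
    edgeColor c x y = i ↔ (x ⋖ y ∧ c x y = i) ∨ (y ⋖ x ∧ c y x = i) := by
  rcases h with h | h
  · have h' : ¬ y ⋖ x := fun h' => h.lt.not_gt h'.lt
    simp [edgeColor_of_covBy h, h, h']
  · have h' : ¬ x ⋖ y := fun h' => h.lt.not_gt h'.lt
    simp [edgeColor_of_covBy' h, h, h']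

lemma walkColors_succ (p : ℕ → α) (n : ℕ) :
    walkColors c p (n + 1) = edgeColor c (p 0) (p 1) ::ₘ walkColors c (fun j => p (j + 1)) n := by
  simp [walkColors, Multiset.range, List.range_succ_eq_map, Function.comp_def]

lemma walkColors_getVert_cons {x y z : α} (h : (hasse α).Adj x y) (w : (hasse α).Walk y z)
    (n : ℕ) : walkColors c (Walk.cons h w).getVert (n + 1) =
      edgeColor c x y ::ₘ walkColors c w.getVert n := by
  simp [walkColors_succ]

open Classical in
lemma IsHasseWalk.ncard_eq_count_walkColors {p : ℕ → α} {n : ℕ} (hp : IsHasseWalk p n)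
    (i : I) :
    Set.ncard {j : ℕ | j < n ∧
        ((p j ⋖ p (j + 1) ∧ c (p j) (p (j + 1)) = i) ∨
          (p (j + 1) ⋖ p j ∧ c (p (j + 1)) (p j) = i))} = (walkColors c p n).count i := by
  have : {j : ℕ | j < n ∧
        ((p j ⋖ p (j + 1) ∧ c (p j) (p (j + 1)) = i) ∨
          (p (j + 1) ⋖ p j ∧ c (p (j + 1)) (p j) = i))} =
      ↑((Finset.range n).filter fun j => i = edgeColor c (p j) (p (j + 1))) := by
    ext j
    simp only [Set.mem_ofPred_eq, Finset.coe_filter, Finset.mem_range]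
    exact and_congr_right fun hj => (eq_comm.trans (edgeColor_eq_iff (hp j hj) i)).symm
  rw [this, Set.ncard_coe_finset, walkColors, Multiset.count_map]
  rfl

end Coloring

section Lattice

variable {L : Type*} [Lattice L]

noncomputable def coverDist (x y : L) : ℕ :=
  (natHeight (x ⊔ y) - natHeight x) + (natHeight (x ⊔ y) - natHeight y)

@[simp] lemma coverDist_self (x : L) : coverDist x x = 0 := by simp [coverDist]

end Lattice

theorem CovBy.sup_covBy_sup_of_not_le {α : Type*} [Lattice α] [IsModularLattice α] {x y : α}
    (t : α) (h : x ⋖ y) (hy : ¬ y ≤ x ⊔ t) : x ⊔ t ⋖ y ⊔ t := by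
  have hinf : y ⊓ (x ⊔ t) = x :=
    (h.eq_or_eq (le_inf h.le le_sup_left) inf_le_left).resolve_right
      fun heq => hy (heq ▸ inf_le_right)
  have := covBy_sup_of_inf_covBy_left (hinf.symm ▸ h : y ⊓ (x ⊔ t) ⋖ y)
  rwa [← sup_assoc, sup_eq_left.2 h.le] at this

section Modular

variable {L : Type*} [Lattice L] [IsModularLattice L] [Fintype L] {x y s a b u t : L}

theorem CovBy.natHeight_eq_add_one (h : x ⋖ y) : natHeight y = natHeight x + 1 := by
  induction y using WellFoundedLT.induction generalizing x with
  | _ y ih =>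
  obtain ⟨z, hzy, hz⟩ := exists_covBy_natHeight_eq_add_one h.lt
  obtain rfl | hxz := eq_or_ne x z
  · exact hz
  have hsup : x ⊔ z = y := h.wcovBy.sup_eq hzy.wcovBy hxz
  have hx := ih x h.lt (inf_covBy_of_covBy_sup_right (hsup ▸ hzy : z ⋖ x ⊔ z))
  have hz' := ih z hzy.lt (inf_covBy_of_covBy_sup_left (hsup ▸ h : x ⋖ x ⊔ z))
  omega

lemma exists_hasse_walk_of_le (h : x ≤ y) :
    ∃ w : (hasse L).Walk x y, w.length = natHeight y - natHeight x := by
  induction hk : natHeight y - natHeight x generalizing x with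
  | zero =>
    obtain rfl := eq_of_le_of_natHeight_le h (by omega)
    exact ⟨.nil, rfl⟩
  | succ k ih =>
    obtain ⟨z, hxz, hzy⟩ := exists_covBy_le_of_lt (h.lt_of_ne (by rintro rfl; simp at hk))
    obtain ⟨w, hw⟩ := ih hzy (by have := hxz.natHeight_eq_add_one; omega)
    exact ⟨.cons (hasse_adj.2 (.inl hxz)) w, by simp [hw]⟩

lemma exists_hasse_walk_length_eq_coverDist (x y : L) :
    ∃ w : (hasse L).Walk x y, w.length = coverDist x y := by
  obtain ⟨w₁, h₁⟩ := exists_hasse_walk_of_le (le_sup_left : x ≤ x ⊔ y)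
  obtain ⟨w₂, h₂⟩ := exists_hasse_walk_of_le (le_sup_right : y ≤ x ⊔ y)
  exact ⟨w₁.append w₂.reverse, by simp [coverDist, h₁, h₂]⟩

lemma CovBy.coverDist_eq_of_le (h : x ⋖ y) (hy : y ≤ x ⊔ t) :
    coverDist x t = coverDist y t + 1 := by
  have hsup : y ⊔ t = x ⊔ t := le_antisymm (sup_le hy le_sup_right) (sup_le_sup_right h.le t)
  have := h.natHeight_eq_add_one
  have := natHeight_strictMono.monotone hy
  have := natHeight_strictMono.monotone (le_sup_right : t ≤ x ⊔ t)
  unfold coverDist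
  rw [hsup]
  omega

lemma CovBy.coverDist_eq_of_not_le (h : x ⋖ y) (hy : ¬ y ≤ x ⊔ t) :
    coverDist y t = coverDist x t + 1 := by
  have := h.natHeight_eq_add_one
  have := (h.sup_covBy_sup_of_not_le t hy).natHeight_eq_add_one
  have := natHeight_strictMono.monotone (le_sup_left : x ≤ x ⊔ t)
  have := natHeight_strictMono.monotone (le_sup_right : t ≤ x ⊔ t)
  unfold coverDist
  omega

lemma CovBy.coverDist_lt_iff (h : x ⋖ y) : coverDist y t < coverDist x t ↔ y ≤ x ⊔ t := by
  by_cases hy : y ≤ x ⊔ t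
  · simp [h.coverDist_eq_of_le hy, hy]
  · simp [h.coverDist_eq_of_not_le hy, hy]

lemma CovBy.coverDist_lt_iff' (h : x ⋖ y) :
    coverDist x t < coverDist y t ↔ ¬ y ≤ x ⊔ t := by
  by_cases hy : y ≤ x ⊔ t
  · simp [h.coverDist_eq_of_le hy, hy]
  · simp [h.coverDist_eq_of_not_le hy, hy]

lemma coverDist_le_add_one_of_adj (h : (hasse L).Adj x y) (t : L) :
    coverDist x t ≤ coverDist y t + 1 := by
  rcases h with h | h
  · by_cases hy : y ≤ x ⊔ t
    · exact (h.coverDist_eq_of_le hy).le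
    · have := h.coverDist_eq_of_not_le hy; omega
  · by_cases hx : x ≤ y ⊔ t
    · have := h.coverDist_eq_of_le hx; omega
    · have := h.coverDist_eq_of_not_le hx; omega

lemma coverDist_add_one_of_adj_of_lt (h : (hasse L).Adj x y) (hlt : coverDist y t < coverDist x t) :
    coverDist y t + 1 = coverDist x t := by
  have := coverDist_le_add_one_of_adj h t
  omega

lemma IsHasseWalk.coverDist_le {p : ℕ → L} {n : ℕ} (h : IsHasseWalk p n) (t : L) :
    coverDist (p 0) t ≤ coverDist (p n) t + n := by
  induction n with
  | zero => simp
  | succ n ih =>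
    have := ih h.of_succ
    have := coverDist_le_add_one_of_adj (h n n.lt_succ_self) t
    omega

lemma IsHasseWalk.coverDist_tail {p : ℕ → L} {n : ℕ} (h : IsHasseWalk p (n + 1))
    (hpt : p (n + 1) = t) (hd : coverDist (p 0) t = n + 1) : coverDist (p 1) t = n := by
  have := h.tail.coverDist_le t
  have := coverDist_le_add_one_of_adj (h 0 n.succ_pos) t
  simp only [zero_add, hpt, coverDist_self] at *
  omega

lemma coverDist_add_two_of_adj (hsa : (hasse L).Adj s a) (hau : (hasse L).Adj a u)
    (ha : coverDist a t < coverDist s t) (hu : coverDist u t < coverDist a t) :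
    coverDist u t + 2 = coverDist s t := by
  have := coverDist_add_one_of_adj_of_lt hsa ha
  have := coverDist_add_one_of_adj_of_lt hau hu
  omega

lemma exists_covBy_covBy_coverDist_lt (hsa : s ⋖ a) (hbs : b ⋖ s)
    (ha : coverDist a t < coverDist s t) (hb : coverDist b t < coverDist s t) :
    ∃ x, b ⋖ x ∧ x ⋖ a ∧ s ≠ x ∧ coverDist x t < coverDist a t := by
  have has : a ≤ s ⊔ t := hsa.coverDist_lt_iff.1 ha
  have hsb : ¬ s ≤ b ⊔ t := hbs.coverDist_lt_iff'.1 hb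
  have hsup : a ⊔ (b ⊔ t) = s ⊔ t :=
    le_antisymm (sup_le has (sup_le_sup_right hbs.le t)) (sup_le_sup hsa.le le_sup_right)
  have hxa : a ⊓ (b ⊔ t) ⋖ a :=
    inf_covBy_of_covBy_sup_right (hsup ▸ hbs.sup_covBy_sup_of_not_le t hsb)
  have hsx : s ≠ a ⊓ (b ⊔ t) := fun h => hsb (h.le.trans inf_le_right)
  have hinf : s ⊓ (a ⊓ (b ⊔ t)) = b := by
    rw [← inf_assoc, inf_eq_left.2 hsa.le]
    exact (hbs.eq_or_eq (le_inf hbs.le le_sup_left) inf_le_left).resolve_right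
      fun h => hsb (h ▸ inf_le_right)
  have hbx : b ⋖ a ⊓ (b ⊔ t) := by
    have hsup' : s ⊔ a ⊓ (b ⊔ t) = a := hsa.wcovBy.sup_eq hxa.wcovBy hsx
    have := inf_covBy_of_covBy_sup_left (hsup'.symm ▸ hsa)
    rwa [hinf] at this
  refine ⟨_, hbx, hxa, hsx, hxa.coverDist_lt_iff'.2 fun h => hsb ?_⟩
  exact hsa.le.trans (h.trans (sup_le inf_le_right le_sup_right))

theorem IsDiamondColoring.exists_square {I : Type*} {c : L → L → I} (hc : IsDiamondColoring c)
    (hsa : (hasse L).Adj s a) (hsb : (hasse L).Adj s b) (hab : a ≠ b)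
    (ha : coverDist a t < coverDist s t) (hb : coverDist b t < coverDist s t) :
    ∃ u, (hasse L).Adj a u ∧ (hasse L).Adj b u ∧ coverDist u t + 2 = coverDist s t ∧
      edgeColor c s a = edgeColor c b u ∧ edgeColor c a u = edgeColor c s b := by
  rcases hsa with hsa | has <;> rcases hsb with hsb | hbs
  · have hinf : a ⊓ b = s := hsa.wcovBy.inf_eq hsb.wcovBy hab
    have hau : a ⋖ a ⊔ b := covBy_sup_of_inf_covBy_right (hinf ▸ hsb)
    have hbu : b ⋖ a ⊔ b := covBy_sup_of_inf_covBy_left (hinf ▸ hsa)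
    have hu : coverDist (a ⊔ b) t < coverDist a t := hau.coverDist_lt_iff.2 <|
      sup_le le_sup_left ((hsb.coverDist_lt_iff.1 hb).trans (sup_le_sup_right hsa.le t))
    obtain ⟨e₁, e₂⟩ := hc s a b (a ⊔ b) hsa hsb hau hbu hab
    refine ⟨a ⊔ b, .inl hau, .inl hbu,
      coverDist_add_two_of_adj (.inl hsa) (.inl hau) ha hu, ?_⟩
    rw [edgeColor_of_covBy hsa, edgeColor_of_covBy hsb, edgeColor_of_covBy hau,
      edgeColor_of_covBy hbu]
    exact ⟨e₁, e₂.symm⟩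
  · obtain ⟨x, hbx, hxa, hsx, hx⟩ := exists_covBy_covBy_coverDist_lt hsa hbs ha hb
    obtain ⟨e₁, e₂⟩ := hc b s x a hbs hbx hsa hxa hsx
    refine ⟨x, .inr hxa, .inl hbx, coverDist_add_two_of_adj (.inl hsa) (.inr hxa) ha hx, ?_⟩
    rw [edgeColor_of_covBy hsa, edgeColor_of_covBy' hbs, edgeColor_of_covBy' hxa,
      edgeColor_of_covBy hbx]
    exact ⟨e₂.symm, e₁.symm⟩
  · obtain ⟨x, hax, hxb, hsx, hx⟩ := exists_covBy_covBy_coverDist_lt hsb has hb ha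
    obtain ⟨e₁, e₂⟩ := hc a s x b has hax hsb hxb hsx
    refine ⟨x, .inl hax, .inr hxb, coverDist_add_two_of_adj (.inl hsb) (.inr hxb) hb hx, ?_⟩
    rw [edgeColor_of_covBy' has, edgeColor_of_covBy hsb, edgeColor_of_covBy hax,
      edgeColor_of_covBy' hxb]
    exact ⟨e₁, e₂⟩
  · have hsup : a ⊔ b = s := has.wcovBy.sup_eq hbs.wcovBy hab
    have hua : a ⊓ b ⋖ a := inf_covBy_of_covBy_sup_right (hsup ▸ hbs)
    have hub : a ⊓ b ⋖ b := inf_covBy_of_covBy_sup_left (hsup ▸ has)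
    have hu : coverDist (a ⊓ b) t < coverDist a t := hua.coverDist_lt_iff'.2 fun h =>
      hbs.coverDist_lt_iff'.1 hb <|
        hsup ▸ sup_le (h.trans (sup_le_sup_right inf_le_right t)) le_sup_left
    obtain ⟨e₁, e₂⟩ := hc (a ⊓ b) a b s hua hub has hbs hab
    refine ⟨a ⊓ b, .inr hua, .inr hub,
      coverDist_add_two_of_adj (.inr has) (.inr hua) ha hu, ?_⟩
    rw [edgeColor_of_covBy' has, edgeColor_of_covBy' hbs, edgeColor_of_covBy' hua,
      edgeColor_of_covBy' hub]
    exact ⟨e₂.symm, e₁⟩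

lemma IsHasseWalk.eq_coverDist {n : ℕ} {p : ℕ → L} (hp : IsHasseWalk p n)
    (hp0 : p 0 = s) (hpn : p n = t)
    (hshort : ∀ (k : ℕ) (r : ℕ → L), r 0 = s → r k = t → IsHasseWalk r k → n ≤ k) :
    n = coverDist s t := by
  obtain ⟨w, hw⟩ := exists_hasse_walk_length_eq_coverDist s t
  refine le_antisymm (hshort _ w.getVert w.getVert_zero ?_ (hw ▸ isHasseWalk_getVert w)) ?_
  · rw [← hw, w.getVert_length]
  · simpa [hp0, hpn] using hp.coverDist_le t

theorem IsDiamondColoring.walkColors_eq {I : Type*} {c : L → L → I} (hc : IsDiamondColoring c)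
    {n : ℕ} {p q : ℕ → L} (hp : IsHasseWalk p n) (hq : IsHasseWalk q n)
    (h0 : p 0 = q 0) (hpt : p n = t) (hqt : q n = t) (hd : coverDist (p 0) t = n) :
    walkColors c p n = walkColors c q n := by
  induction n generalizing p q with
  | zero => rfl
  | succ n ih =>
    have hpd := hp.coverDist_tail hpt hd
    have hqd := hq.coverDist_tail hqt (h0 ▸ hd)
    rw [walkColors_succ, walkColors_succ, h0]
    rw [h0] at hd
    by_cases hab : p 1 = q 1
    · rw [hab, ih hp.tail hq.tail hab hpt hqt hpd]
    obtain _ | k := n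
    · exact absurd (hpt.trans hqt.symm) hab
    have hpa : (hasse L).Adj (q 0) (p 1) := h0 ▸ hp 0 (by omega)
    have hqb : (hasse L).Adj (q 0) (q 1) := hq 0 (by omega)
    obtain ⟨u, hau, hbu, hu, hca, hcb⟩ :=
      hc.exists_square (t := t) hpa hqb hab (by omega) (by omega)
    obtain ⟨w, hw⟩ := exists_hasse_walk_length_eq_coverDist u t
    have hwk : w.length = k := by omega
    have reroute {r : ℕ → L} (hr : IsHasseWalk r (k + 2)) (hrt : r (k + 2) = t)
        (hrd : coverDist (r 1) t = k + 1) (hru : (hasse L).Adj (r 1) u) :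
        walkColors c (fun j => r (j + 1)) (k + 1) =
          edgeColor c (r 1) u ::ₘ walkColors c w.getVert k := by
      have hcons : IsHasseWalk (Walk.cons hru w).getVert (k + 1) := by
        simpa [hwk] using isHasseWalk_getVert (Walk.cons hru w)
      rw [← walkColors_getVert_cons hru, ih hr.tail hcons (Walk.getVert_zero _).symm hrt
        (by rw [Walk.getVert_cons_succ, ← hwk, w.getVert_length]) hrd]
    rw [reroute hp hpt hpd hau, reroute hq hqt hqd hbu, hca, hcb, Multiset.cons_swap]

end Modular

theorem stmt_15 {L I : Type*} [Lattice L] [IsModularLattice L] [Fintype L]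
    (c : L → L → I) (hc : IsDiamondColoring c)
    (s t : L) (n m : ℕ) (p q : ℕ → L)
    (hp0 : p 0 = s) (hpn : p n = t)
    (hpadj : ∀ j < n, p j ⋖ p (j + 1) ∨ p (j + 1) ⋖ p j)
    (hq0 : q 0 = s) (hqm : q m = t)
    (hqadj : ∀ j < m, q j ⋖ q (j + 1) ∨ q (j + 1) ⋖ q j)
    (hpshort : ∀ (k : ℕ) (r : ℕ → L), r 0 = s → r k = t →
      (∀ j < k, r j ⋖ r (j + 1) ∨ r (j + 1) ⋖ r j) → n ≤ k)
    (hqshort : ∀ (k : ℕ) (r : ℕ → L), r 0 = s → r k = t →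
      (∀ j < k, r j ⋖ r (j + 1) ∨ r (j + 1) ⋖ r j) → m ≤ k)
    (i : I) :
    Set.ncard {j : ℕ | j < n ∧
        ((p j ⋖ p (j + 1) ∧ c (p j) (p (j + 1)) = i) ∨
          (p (j + 1) ⋖ p j ∧ c (p (j + 1)) (p j) = i))} =
    Set.ncard {j : ℕ | j < m ∧
        ((q j ⋖ q (j + 1) ∧ c (q j) (q (j + 1)) = i) ∨
          (q (j + 1) ⋖ q j ∧ c (q (j + 1)) (q j) = i))} := by
  have hp : IsHasseWalk p n := hpadj
  have hq : IsHasseWalk q m := hqadj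
  have hn := hp.eq_coverDist hp0 hpn hpshort
  obtain rfl : m = n := (hq.eq_coverDist hq0 hqm hqshort).trans hn.symm
  rw [hp.ncard_eq_count_walkColors, hq.ncard_eq_count_walkColors,
    hc.walkColors_eq hp hq (hp0.trans hq0.symm) hpn hqm (hp0 ▸ hn.symm)]
end

section
/- Fix integers k, N with 1 ≤ k ≤ N−1, and let G be the domino-move graph: its vertices are the k×(N−k) partitions, with σ adjacent to τ if and only if τ − σ ∈ {2ε_j, −2ε_j : 1 ≤ j ≤ k} ∪ {ε_j + ε_{j+1}, −ε_j − ε_{j+1} : 1 ≤ j ≤ k−1}, or τ − σ = ±ε_1 with max(σ_1, τ_1) = N − k. Then G is connected: any k×(N−k) partition can be obtained from any other by a sequence of legal domino moves. -/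
/-!
Removing a domino at the last nonempty row (a horizontal one if that row has at least two
boxes, otherwise a vertical one shared with the row above) lowers the size by two. Hence
every partition is joined, by moves preserving the parity of its size, to the empty
partition or to the single box. The corner move between the first rows of length
`N - k - 1` and `N - k` changes that parity and so links the two.
-/

/-- A `k × (N-k)` partition, presented as a 1-indexed integer sequence
`N - k ≥ σ 1 ≥ σ 2 ≥ ⋯ ≥ σ k ≥ 0` (with value `0` outside the indices `1, …, k`). -/
def IsPart (k N : ℕ) (σ : ℕ → ℤ) : Prop :=
  (∀ i, (i = 0 ∨ k < i) → σ i = 0) ∧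
  (∀ i, 1 ≤ i → i ≤ k → 0 ≤ σ i ∧ σ i ≤ (N : ℤ) - k) ∧
  (∀ i, 1 ≤ i → i < k → σ (i + 1) ≤ σ i)

/-- A legal domino move relates `σ` and `τ`: add/remove a horizontal domino
(`±2ε_j`), a vertical domino (`±(ε_j + ε_{j+1})`), or a single box in the
upper-right corner (`±ε_1` when the first row becomes or ceases to be full). -/
def DominoAdj (k N : ℕ) (σ τ : ℕ → ℤ) : Prop :=
  (∃ j, 1 ≤ j ∧ j ≤ k ∧
    (τ = σ + Pi.single j (2 : ℤ) ∨ σ = τ + Pi.single j (2 : ℤ))) ∨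
  (∃ j, 1 ≤ j ∧ j + 1 ≤ k ∧
    (τ = σ + Pi.single j (1 : ℤ) + Pi.single (j + 1) (1 : ℤ) ∨
      σ = τ + Pi.single j (1 : ℤ) + Pi.single (j + 1) (1 : ℤ))) ∨
  ((τ = σ + Pi.single 1 (1 : ℤ) ∨ σ = τ + Pi.single 1 (1 : ℤ)) ∧
    max (σ 1) (τ 1) = (N : ℤ) - k)

/-- The domino-move graph on `k × (N-k)` partitions. -/
def dominoGraph (k N : ℕ) : SimpleGraph {σ : ℕ → ℤ // IsPart k N σ} where
  Adj σ τ := DominoAdj k N σ.val τ.val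
  symm := by
    constructor
    rintro a b (⟨j, h1, h2, h3⟩ | ⟨j, h1, h2, h3⟩ | ⟨h3, h4⟩)
    · exact Or.inl ⟨j, h1, h2, h3.symm⟩
    · exact Or.inr <| Or.inl ⟨j, h1, h2, h3.symm⟩
    · exact Or.inr <| Or.inr ⟨h3.symm, by rw [max_comm]; exact h4⟩
  loopless := by
    constructor
    rintro a (⟨j, h1, h2, h3 | h3⟩ | ⟨j, h1, h2, h3 | h3⟩ | ⟨h3 | h3, h4⟩)
    · have := congrFun h3 j; simp at this
    · have := congrFun h3 j; simp at this
    · have := congrFun h3 j; simp [Pi.single_apply] at this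
    · have := congrFun h3 j; simp [Pi.single_apply] at this
    · have := congrFun h3 1; simp at this
    · have := congrFun h3 1; simp at this

open Finset

variable {k N : ℕ} {σ : ℕ → ℤ}

def partSize (k : ℕ) (σ : ℕ → ℤ) : ℤ := ∑ i ∈ range (k + 1), σ i

lemma partSize_sub_single {j : ℕ} (hj : j ≤ k) (c : ℤ) :
    partSize k (σ - Pi.single j c) = partSize k σ - c := by
  simp [partSize, sum_sub_distrib, sum_pi_single', Nat.lt_succ_of_le hj]

lemma partSize_single_one (hk : 1 ≤ k) (m : ℤ) : partSize k (Pi.single 1 m) = m := by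
  simp [partSize, sum_pi_single', Nat.lt_succ_of_le hk]

lemma isPart_single_one (hk : 1 ≤ k) {m : ℤ} (h0 : 0 ≤ m) (hm : m ≤ (N : ℤ) - k) :
    IsPart k N (Pi.single 1 m) := by
  refine ⟨fun i hi => ?_, fun i h1 h2 => ?_, fun i h1 h2 => ?_⟩ <;>
    simp only [Pi.single_apply] <;> split_ifs <;> omega

namespace IsPart

lemma nonneg (hσ : IsPart k N σ) (i : ℕ) : 0 ≤ σ i := by
  by_cases h : i = 0 ∨ k < i
  · exact (hσ.1 i h).ge
  · exact (hσ.2.1 i (by omega) (by omega)).1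

lemma partSize_nonneg (hσ : IsPart k N σ) : 0 ≤ partSize k σ :=
  sum_nonneg fun i _ => nonneg hσ i

lemma exists_last_row (hσ : IsPart k N σ) (h0 : σ ≠ 0) :
    ∃ j, 1 ≤ j ∧ j ≤ k ∧ 0 < σ j ∧ ∀ i, j < i → σ i = 0 := by
  classical
  obtain ⟨i, hi⟩ : ∃ i, σ i ≠ 0 := Function.ne_iff.1 h0
  have hik : 1 ≤ i ∧ i ≤ k := by
    by_contra h
    exact hi (hσ.1 i (by omega))
  set j := Nat.findGreatest (fun i => σ i ≠ 0) k
  have hij : i ≤ j := Nat.le_findGreatest hik.2 hi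
  have hj : σ j ≠ 0 := Nat.findGreatest_spec (P := fun i => σ i ≠ 0) hik.2 hi
  refine ⟨j, by omega, Nat.findGreatest_le k, (nonneg hσ j).lt_of_ne' hj, fun l hl => ?_⟩
  by_cases hlk : l ≤ k
  · exact not_not.1 (Nat.findGreatest_is_greatest hl hlk)
  · exact hσ.1 l (Or.inr (by omega))

lemma sub_horizontal (hσ : IsPart k N σ) {j : ℕ} (hj : 1 ≤ j) (h2 : 2 ≤ σ j)
    (hnext : σ (j + 1) = 0) : IsPart k N (σ - Pi.single j 2) := by
  obtain ⟨hout, hbound, hmono⟩ := hσ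
  refine ⟨fun i hi => ?_, fun i h1 h2 => ?_, fun i h1 h2 => ?_⟩ <;>
    simp only [Pi.sub_apply, Pi.single_apply]
  · have := hout i hi
    split_ifs <;> subst_vars <;> omega
  · have := hbound i h1 h2
    split_ifs <;> subst_vars <;> omega
  · have := hmono i h1 h2
    split_ifs <;> subst_vars <;> omega

lemma sub_vertical (hσ : IsPart k N σ) {j : ℕ} (hj : 1 ≤ j) (hjk : j + 1 ≤ k)
    (hpos : 0 < σ (j + 1)) (hnext : σ (j + 2) = 0) :
    IsPart k N (σ - Pi.single j 1 - Pi.single (j + 1) 1) := by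
  obtain ⟨hout, hbound, hmono⟩ := hσ
  have hj_mono := hmono j hj (by omega)
  have hnext' : σ (j + 1 + 1) = 0 := hnext
  refine ⟨fun i hi => ?_, fun i h1 h2 => ?_, fun i h1 h2 => ?_⟩ <;>
    simp only [Pi.sub_apply, Pi.single_apply]
  · have := hout i hi
    split_ifs <;> subst_vars <;> omega
  · have := hbound i h1 h2
    split_ifs <;> subst_vars <;> omega
  · have := hmono i h1 h2
    split_ifs <;> subst_vars <;> omega

lemma eq_single_one (hσ : IsPart k N σ) (h1 : σ 1 = 1) (hlast : ∀ i, 1 < i → σ i = 0) :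
    σ = Pi.single 1 1 := by
  funext i
  rcases Nat.lt_trichotomy i 1 with h | rfl | h
  · simpa [show i = 0 by omega] using hσ.1 0 (Or.inl rfl)
  · simpa using h1
  · simpa [Pi.single_apply, h.ne'] using hlast i h

lemma exists_domino_removal (hσ : IsPart k N σ) (h0 : σ ≠ 0) (h1 : σ ≠ Pi.single 1 1) :
    ∃ τ, IsPart k N τ ∧ DominoAdj k N τ σ ∧ partSize k τ + 2 = partSize k σ := by
  obtain ⟨j, hj, hjk, hpos, hlast⟩ := exists_last_row hσ h0
  by_cases h2 : 2 ≤ σ j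
  · refine ⟨σ - Pi.single j 2, sub_horizontal hσ hj h2 (hlast _ j.lt_succ_self),
      Or.inl ⟨j, hj, hjk, Or.inl (sub_add_cancel _ _).symm⟩, ?_⟩
    rw [partSize_sub_single hjk]
    ring
  · have hj1 : j ≠ 1 := by
      rintro rfl
      exact h1 (eq_single_one hσ (by omega) hlast)
    obtain ⟨l, rfl⟩ : ∃ l, j = l + 1 := ⟨j - 1, by omega⟩
    have hl : 1 ≤ l := by omega
    refine ⟨σ - Pi.single l 1 - Pi.single (l + 1) 1,
      sub_vertical hσ hl hjk hpos (hlast _ (by omega)),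
      Or.inr (Or.inl ⟨l, hl, hjk, Or.inl (by abel)⟩), ?_⟩
    rw [partSize_sub_single hjk, partSize_sub_single (by omega)]
    ring

end IsPart

lemma dominoAdj_single_corner :
    DominoAdj k N (Pi.single 1 ((N : ℤ) - k - 1)) (Pi.single 1 ((N : ℤ) - k)) :=
  Or.inr (Or.inr ⟨Or.inl (by rw [← Pi.single_add, sub_add_cancel]), by simp⟩)

theorem dominoGraph_reachable_single_partSize_emod_two (hk : 1 ≤ k)
    (σ ρ : {σ // IsPart k N σ}) (hρ : ρ.1 = Pi.single 1 (partSize k σ.1 % 2)) :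
    (dominoGraph k N).Reachable σ ρ := by
  induction hn : (partSize k σ.1).toNat using Nat.strong_induction_on generalizing σ with
  | _ n ih =>
  obtain ⟨σ, hσ⟩ := σ
  dsimp only at hn hρ
  by_cases h0 : σ = 0
  · subst h0
    obtain rfl : ρ = ⟨0, hσ⟩ := Subtype.ext (by simpa [partSize] using hρ)
    rfl
  by_cases h1 : σ = Pi.single 1 1
  · subst h1
    obtain rfl : ρ = ⟨Pi.single 1 1, hσ⟩ :=
      Subtype.ext (by simpa [partSize_single_one hk] using hρ)
    rfl
  obtain ⟨τ, hτ, hadj, hsize⟩ := IsPart.exists_domino_removal hσ h0 h1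
  have hτ_nonneg := IsPart.partSize_nonneg hτ
  have hτρ := ih _ (by dsimp only; omega) ⟨τ, hτ⟩
    (by dsimp only; rw [hρ]; congr 1; omega) rfl
  exact (SimpleGraph.Adj.reachable hadj).symm.trans hτρ

lemma dominoGraph_reachable_single_zero_single_one (hk : 1 ≤ k) (hd : 1 ≤ (N : ℤ) - k)
    (σ₀ σ₁ : {σ // IsPart k N σ}) (h₀ : σ₀.1 = Pi.single 1 0)
    (h₁ : σ₁.1 = Pi.single 1 1) :
    (dominoGraph k N).Reachable σ₀ σ₁ := by
  let full : {σ // IsPart k N σ} := ⟨_, isPart_single_one hk (by omega) le_rfl⟩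
  let almostFull : {σ // IsPart k N σ} :=
    ⟨_, isPart_single_one hk (m := N - k - 1) (by omega) (by omega)⟩
  have corner : (dominoGraph k N).Adj almostFull full := dominoAdj_single_corner
  have reach (σ ρ : {σ // IsPart k N σ}) (m : ℤ) (hσ : σ.1 = Pi.single 1 m)
      (hρ : ρ.1 = Pi.single 1 (m % 2)) : (dominoGraph k N).Reachable σ ρ :=
    dominoGraph_reachable_single_partSize_emod_two hk σ ρ
      (by rw [hρ, hσ, partSize_single_one hk])
  rcases Int.emod_two_eq (N - k) with h | h
  · exact (reach full σ₀ _ rfl (by rw [h₀, h])).symm.trans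
      (corner.reachable.symm.trans (reach almostFull σ₁ _ rfl (by rw [h₁]; congr 1; omega)))
  · exact (reach almostFull σ₀ _ rfl (by rw [h₀]; congr 1; omega)).symm.trans
      (corner.reachable.trans (reach full σ₁ _ rfl (by rw [h₁, h])))

/-- Any `k × (N-k)` partition can be obtained from any other by a sequence of
legal domino moves: the domino-move graph is connected. -/
theorem stmt_19 (k N : ℕ) (hk : 1 ≤ k) (hkN : k ≤ N - 1) :
    (dominoGraph k N).Connected := by
  have hd : (1 : ℤ) ≤ N - k := by omega
  let empty : {σ // IsPart k N σ} := ⟨_, isPart_single_one hk (m := 0) le_rfl (by omega)⟩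
  let box : {σ // IsPart k N σ} := ⟨_, isPart_single_one hk (m := 1) zero_le_one hd⟩
  have from_empty (σ : {σ // IsPart k N σ}) : (dominoGraph k N).Reachable empty σ := by
    rcases Int.emod_two_eq (partSize k σ.1) with h | h
    · exact (dominoGraph_reachable_single_partSize_emod_two hk σ empty (by rw [h])).symm
    · exact (dominoGraph_reachable_single_zero_single_one hk hd empty box rfl rfl).trans
        (dominoGraph_reachable_single_partSize_emod_two hk σ box (by rw [h])).symm
  have : Nonempty {σ // IsPart k N σ} := ⟨empty⟩
  exact ⟨fun σ τ => (from_empty σ).symm.trans (from_empty τ)⟩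
end
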